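/- arXiv:1809.05028 — 9 statements merged into one kernel-verified Lean document; each statement's English description precedes it below -/
import Mathlib

section
/- For every n ≥ 1, every ℓ ≥ 2, and every vertex-weight function W : V(K_n) → [0,∞), the product-edge-weight extremal number ex(n, w_Π, K_ℓ) — the maximum of Σ_{uv ∈ E(G)} W(u)·W(v) over all K_ℓ-free subgraphs G of K_n — is equal to the maximum, over all partitions 𝒫 of the vertex set V(K_n) into ℓ−1 (possibly empty) parts, of Σ_{P ≠ P' ∈ 𝒫} W(P)·W(P'), where W(S) = Σ_{v ∈ S} W(v) and the sum is over unordered pairs of distinct parts. -/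
/-!
Weighted form of Erdős's degree-majorization proof of Turán's theorem. Let `x` be a vertex of
maximal weighted degree `∑_{v ∼ x} W v` in a `K_{m+1}`-free graph on `s`, and `N` its
neighbourhood, `A = s \ N`. Bounding the degree of each vertex of `A` by that of `x`, the edges
meeting `A` weigh at most `W(A) · W(N)`, so `w(G[s]) ≤ w(G[N]) + 2 W(A) W(N)` when pairs are
counted in order. Since `G[N]` is `K_m`-free, by induction `w(G[N])` is at most the
weight of some complete `(m-1)`-partite graph on `N`; adding `A` as a new part yields a complete
`m`-partite graph on `s` of weight exactly that bound. Hence the maximum over `K_ℓ`-free graphs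
is attained by a complete `(ℓ-1)`-partite graph, i.e. by a colouring `V → Fin (ℓ - 1)`.
-/

open Finset

namespace SimpleGraph

open scoped Classical

variable {V κ R : Type*} [CommRing R]

noncomputable def crossWeight (G : SimpleGraph V) (W : V → R) (s t : Finset V) : R :=
  ∑ u ∈ s, ∑ v ∈ t, if G.Adj u v then W u * W v else 0

variable (G : SimpleGraph V) (W : V → R) {s t t₁ t₂ : Finset V}

lemma crossWeight_eq_sum_mul (s t : Finset V) :
    G.crossWeight W s t = ∑ u ∈ s, W u * ∑ v ∈ t with G.Adj u v, W v := by
  simp only [crossWeight, sum_filter, mul_sum, mul_ite, mul_zero]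

lemma crossWeight_comm (s t : Finset V) : G.crossWeight W s t = G.crossWeight W t s := by
  rw [crossWeight, sum_comm]
  simp only [G.adj_comm, mul_comm, crossWeight]

lemma crossWeight_union_left (h : Disjoint t₁ t₂) :
    G.crossWeight W (t₁ ∪ t₂) s = G.crossWeight W t₁ s + G.crossWeight W t₂ s :=
  sum_union h

lemma crossWeight_union_right (h : Disjoint t₁ t₂) :
    G.crossWeight W s (t₁ ∪ t₂) = G.crossWeight W s t₁ + G.crossWeight W s t₂ := by
  simp only [crossWeight, sum_union h, sum_add_distrib]

lemma crossWeight_congr {H : SimpleGraph V} (h : ∀ u ∈ s, ∀ v ∈ t, (G.Adj u v ↔ H.Adj u v)) :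
    G.crossWeight W s t = H.crossWeight W s t :=
  sum_congr rfl fun u hu => sum_congr rfl fun v hv => by simp only [h u hu v hv]

lemma crossWeight_eq_zero (h : ∀ u ∈ s, ∀ v ∈ t, ¬ G.Adj u v) : G.crossWeight W s t = 0 :=
  sum_eq_zero fun u hu => sum_eq_zero fun v hv => if_neg (h u hu v hv)

lemma crossWeight_eq_mul (h : ∀ u ∈ s, ∀ v ∈ t, G.Adj u v) :
    G.crossWeight W s t = (∑ u ∈ s, W u) * ∑ v ∈ t, W v := by
  rw [sum_mul_sum]
  exact sum_congr rfl fun u hu => sum_congr rfl fun v hv => if_pos (h u hu v hv)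

lemma crossWeight_self_eq_of_subset (hts : t ⊆ s) :
    G.crossWeight W s s = G.crossWeight W t t + 2 * G.crossWeight W (s \ t) t
      + G.crossWeight W (s \ t) (s \ t) := by
  have hdisj : Disjoint t (s \ t) := disjoint_sdiff
  conv_lhs => rw [← union_sdiff_of_subset hts]
  rw [crossWeight_union_left _ _ hdisj, crossWeight_union_right _ _ hdisj,
    crossWeight_union_right _ _ hdisj, G.crossWeight_comm W t (s \ t)]
  ring

lemma crossWeight_self_eq_of_join (hts : t ⊆ s) (hjoin : ∀ u ∈ s \ t, ∀ v ∈ t, G.Adj u v)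
    (hind : ∀ u ∈ s \ t, ∀ v ∈ s \ t, ¬ G.Adj u v) :
    G.crossWeight W s s = G.crossWeight W t t + 2 * ((∑ v ∈ s \ t, W v) * ∑ v ∈ t, W v) := by
  rw [G.crossWeight_self_eq_of_subset W hts, G.crossWeight_eq_mul W hjoin,
    G.crossWeight_eq_zero W hind, add_zero]

lemma crossWeight_comap [Fintype V] [Fintype κ] [DecidableEq κ] (H : SimpleGraph κ) (c : V → κ) :
    (H.comap c).crossWeight W univ univ =
      H.crossWeight (fun P => ∑ v with c v = P, W v) univ univ := by
  have hfibers : ∀ P Q, (if H.Adj P Q then (∑ u with c u = P, W u) * ∑ v with c v = Q, W v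
      else 0) = ∑ u with c u = P, ∑ v with c v = Q, if H.Adj (c u) (c v) then W u * W v else 0 := by
    intro P Q
    calc _ = ∑ u with c u = P, ∑ v with c v = Q, if H.Adj P Q then W u * W v else 0 := by
          split_ifs <;> simp [sum_mul_sum]
      _ = _ := sum_congr rfl fun u hu => sum_congr rfl fun v hv => by
          rw [(mem_filter.1 hu).2, (mem_filter.1 hv).2]
  symm
  simp only [crossWeight, hfibers]
  rw [sum_congr rfl fun P _ => sum_comm]
  simp only [sum_fiberwise, comap_adj]

variable {W} [LinearOrder R] [IsStrictOrderedRing R]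

lemma crossWeight_nonneg (hW : ∀ v, 0 ≤ W v) (s t : Finset V) : 0 ≤ G.crossWeight W s t := by
  rw [crossWeight_eq_sum_mul]
  exact sum_nonneg fun u _ => mul_nonneg (hW u) (sum_nonneg fun v _ => hW v)

lemma crossWeight_le_mul {D : R} (hW : ∀ v, 0 ≤ W v)
    (hdeg : ∀ u ∈ s, ∑ v ∈ t with G.Adj u v, W v ≤ D) :
    G.crossWeight W s t ≤ (∑ u ∈ s, W u) * D := by
  rw [crossWeight_eq_sum_mul, sum_mul]
  exact sum_le_sum fun u hu => mul_le_mul_of_nonneg_left (hdeg u hu) (hW u)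

lemma crossWeight_self_le_of_degree_le (hW : ∀ v, 0 ≤ W v) (hts : t ⊆ s)
    (hdeg : ∀ u ∈ s, ∑ v ∈ s with G.Adj u v, W v ≤ ∑ v ∈ t, W v) :
    G.crossWeight W s s ≤ G.crossWeight W t t + 2 * ((∑ v ∈ s \ t, W v) * ∑ v ∈ t, W v) := by
  have hout : G.crossWeight W (s \ t) t + G.crossWeight W (s \ t) (s \ t) ≤
      (∑ v ∈ s \ t, W v) * ∑ v ∈ t, W v := by
    rw [← crossWeight_union_right _ _ disjoint_sdiff, union_sdiff_of_subset hts]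
    exact G.crossWeight_le_mul hW fun u hu => hdeg u (sdiff_subset hu)
  have := G.crossWeight_nonneg hW (s \ t) (s \ t)
  rw [G.crossWeight_self_eq_of_subset W hts]
  linarith

lemma cliqueFree_comap_top {m : ℕ} (c : V → Fin m) :
    ((⊤ : SimpleGraph (Fin m)).comap c).CliqueFree (m + 1) :=
  Colorable.cliqueFree ⟨Coloring.mk c id⟩ m.lt_succ_self

variable {G}

theorem CliqueFreeOn.exists_crossWeight_le_comap_top (hW : ∀ v, 0 ≤ W v) {m : ℕ} (hm : 1 ≤ m)
    {s : Finset V} (h : G.CliqueFreeOn s (m + 1)) :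
    ∃ c : V → Fin m,
      G.crossWeight W s s ≤ ((⊤ : SimpleGraph (Fin m)).comap c).crossWeight W s s := by
  induction m, hm using Nat.le_induction generalizing s with
  | base =>
    refine ⟨fun _ => 0, ?_⟩
    rw [G.crossWeight_eq_zero W fun u hu v hv huv => (G.cliqueFreeOn_two.1 h) hu hv huv.ne huv]
    exact crossWeight_nonneg _ hW s s
  | succ m hm ih =>
    obtain rfl | hs := s.eq_empty_or_nonempty
    · exact ⟨fun _ => 0, by simp [crossWeight]⟩
    obtain ⟨x, hxs, hxmax⟩ := s.exists_max_image (fun u => ∑ v ∈ s with G.Adj u v, W v) hs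
    set t := s.filter (G.Adj x)
    have hts : t ⊆ s := filter_subset _ _
    have ht : G.CliqueFreeOn t (m + 1) := by
      convert CliqueFreeOn.of_succ G h hxs
      ext; simp [t]
    obtain ⟨c', hc'⟩ := ih ht
    let c : V → Fin (m + 1) := fun v => if v ∈ t then (c' v).castSucc else Fin.last m
    have hc_t : ∀ u ∈ t, c u = (c' u).castSucc := fun u hu => if_pos hu
    have hc_out : ∀ u ∈ s \ t, c u = Fin.last m := fun u hu => if_neg (mem_sdiff.1 hu).2
    have hsplit := (⊤ : SimpleGraph (Fin (m + 1))).comap c |>.crossWeight_self_eq_of_join W hts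
      (fun u hu v hv => by simp [hc_out u hu, hc_t v hv, (Fin.castSucc_lt_last _).ne'])
      (fun u hu v hv => by simp [hc_out u hu, hc_out v hv])
    have hon_t : ((⊤ : SimpleGraph (Fin (m + 1))).comap c).crossWeight W t t =
        ((⊤ : SimpleGraph (Fin m)).comap c').crossWeight W t t :=
      crossWeight_congr _ W fun u hu v hv => by simp [hc_t u hu, hc_t v hv]
    refine ⟨c, ?_⟩
    calc G.crossWeight W s s
        ≤ G.crossWeight W t t + 2 * ((∑ v ∈ s \ t, W v) * ∑ v ∈ t, W v) :=
          G.crossWeight_self_le_of_degree_le hW hts hxmax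
      _ ≤ _ := by rw [hsplit, hon_t]; gcongr

end SimpleGraph

open SimpleGraph

open scoped Classical in
theorem product_weight_turan_general (n ℓ : ℕ) (hℓ : 2 ≤ ℓ)
    (W : Fin n → ℝ) (hW : ∀ v, 0 ≤ W v) :
    ∃ x : ℝ,
      IsGreatest {y : ℝ | ∃ G : SimpleGraph (Fin n), G.CliqueFree ℓ ∧
        y = (∑ u : Fin n, ∑ v : Fin n, if G.Adj u v then W u * W v else 0) / 2} x ∧
      IsGreatest {y : ℝ | ∃ c : Fin n → Fin (ℓ - 1),
        y = (∑ P : Fin (ℓ - 1), ∑ Q : Fin (ℓ - 1), if P ≠ Q then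
              (∑ v ∈ Finset.univ.filter (fun v => c v = P), W v) *
              (∑ v ∈ Finset.univ.filter (fun v => c v = Q), W v) else 0) / 2} x := by
  have hℓ' : ℓ - 1 + 1 = ℓ := Nat.sub_add_cancel (by omega)
  have : Nonempty (Fin (ℓ - 1)) := ⟨⟨0, by omega⟩⟩
  let value (c : Fin n → Fin (ℓ - 1)) :=
    ((⊤ : SimpleGraph (Fin (ℓ - 1))).comap c).crossWeight W univ univ / 2
  have hvalue : ∀ c, value c = (∑ P : Fin (ℓ - 1), ∑ Q : Fin (ℓ - 1), if P ≠ Q then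
      (∑ v ∈ univ.filter (fun v => c v = P), W v) *
      (∑ v ∈ univ.filter (fun v => c v = Q), W v) else 0) / 2 := by
    intro c
    rw [show value c = _ / 2 from rfl, crossWeight_comap]
    simp only [crossWeight, top_adj]
  obtain ⟨c₀, -, hc₀⟩ := exists_max_image univ value univ_nonempty
  refine ⟨value c₀, ⟨⟨_, (cliqueFree_comap_top c₀).mono hℓ'.le, rfl⟩, ?_⟩, ⟨⟨c₀, hvalue c₀⟩, ?_⟩⟩
  · rintro _ ⟨G, hG, rfl⟩
    obtain ⟨c, hc⟩ := (hG.mono hℓ'.ge).cliqueFreeOn.exists_crossWeight_le_comap_top (s := univ) hW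
      (by omega)
    exact (div_le_div_of_nonneg_right hc zero_le_two).trans (hc₀ c (mem_univ c))
  · rintro _ ⟨c, rfl⟩
    exact hvalue c ▸ hc₀ c (mem_univ c)

open scoped Classical in
/-- For every `n ≥ 1`, `ℓ ≥ 2` and nonnegative vertex-weight function
`W : V(K_n) → [0,∞)`, the product-edge-weight extremal number `ex(n, w_Π, K_ℓ)` (the maximum
of `∑_{uv ∈ E(G)} W(u)W(v)` over `K_ℓ`-free graphs `G` on `n` vertices) equals the maximum,
over all partitions of the vertex set into `ℓ - 1` (possibly empty) parts, of
`∑_{P ≠ P'} W(P) W(P')` (sum over unordered pairs of distinct parts).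
Weights of graphs and partition-pair sums are expressed as half the sum over ordered pairs. -/
theorem product_weight_turan (n ℓ : ℕ) (hn : 1 ≤ n) (hℓ : 2 ≤ ℓ)
    (W : Fin n → ℝ) (hW : ∀ v, 0 ≤ W v) :
    ∃ x : ℝ,
      IsGreatest {y : ℝ | ∃ G : SimpleGraph (Fin n), G.CliqueFree ℓ ∧
        y = (∑ u : Fin n, ∑ v : Fin n, if G.Adj u v then W u * W v else 0) / 2} x ∧
      IsGreatest {y : ℝ | ∃ c : Fin n → Fin (ℓ - 1),
        y = (∑ P : Fin (ℓ - 1), ∑ Q : Fin (ℓ - 1), if P ≠ Q then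
              (∑ v ∈ Finset.univ.filter (fun v => c v = P), W v) *
              (∑ v ∈ Finset.univ.filter (fun v => c v = Q), W v) else 0) / 2} x :=
  product_weight_turan_general n ℓ hℓ W hW
end

section
/- Let n ≥ 1, ℓ ≥ 3, and let W : V(K_n) → (0,∞) be a strictly positive vertex-weight function. If G is a K_ℓ-free subgraph of K_n whose product-edge-weight w_Π(G) = Σ_{uv ∈ E(G)} W(u)W(v) is maximum among all K_ℓ-free subgraphs of K_n, then G is complete multipartite; that is, there do not exist three vertices x, y, z of G with yz ∈ E(G) but xy ∉ E(G) and xz ∉ E(G). -/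
/-!
Zykov symmetrization, weighted. Write `d(v) = ∑_{u ~ v} W(u)` for the weighted degree. Turning a
vertex `t` into a twin of a non-neighbour `s` keeps the graph `K_ℓ`-free and changes the product
weight by `W(t) (d(s) - d(t))`, so in a maximal graph non-adjacent vertices have equal weighted
degree. If `yz` were an edge with `x` adjacent to neither, making both `y` and `z` twins of `x`
would change the weight by `W(y) (d(x) - d(y)) + W(z) (d(x) - d(z)) + W(y) W(z) = W(y) W(z) > 0`:
the edge `yz` is subtracted in both degree terms but lost only once.
-/

open Finset

namespace SimpleGraph

variable {V R : Type*} [Fintype V] [DecidableEq V] [CommRing R] (W : V → R) (G : SimpleGraph V)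
  [DecidableRel G.Adj]

/-- Twice the product weight `w_Π(G)`: each edge is counted once in each orientation. -/
def productWeight : R := ∑ u, ∑ v, if G.Adj u v then W u * W v else 0

def weightedDegree (v : V) : R := ∑ u, if G.Adj v u then W u else 0

variable {s t : V}

lemma weightedDegree_replaceVertex_of_ne {v : V} (hv : v ≠ t) :
    (G.replaceVertex s t).weightedDegree W v =
      G.weightedDegree W v + ((if G.Adj v s then W t else 0) - if G.Adj v t then W t else 0) := by
  have hpoint : ∀ u, (if (G.replaceVertex s t).Adj v u then W u else 0) =
      (if G.Adj v u then W u else 0) +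
        if u = t then (if G.Adj v s then W t else 0) - (if G.Adj v t then W t else 0) else 0 := by
    intro u
    by_cases hu : u = t
    · subst hu; simp [replaceVertex, hv]
    · simp [replaceVertex, hv, hu]
  simp only [weightedDegree, hpoint, sum_add_distrib, sum_ite_eq', mem_univ, if_true]

lemma productWeight_replaceVertex_of_not_adj (h : ¬G.Adj s t) :
    (G.replaceVertex s t).productWeight W =
      G.productWeight W + 2 * W t * (G.weightedDegree W s - G.weightedDegree W t) := by
  have hpoint : ∀ u v, (if (G.replaceVertex s t).Adj u v then W u * W v else 0) =
      (if G.Adj u v then W u * W v else 0) +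
      (if u = t then W t * ((if G.Adj s v then W v else 0) - if G.Adj t v then W v else 0)
        else 0) +
      (if v = t then W t * ((if G.Adj s u then W u else 0) - if G.Adj t u then W u else 0)
        else 0) := by
    intro u v
    by_cases hu : u = t <;> by_cases hv : v = t <;> simp only [replaceVertex, hu, hv] <;>
      split_ifs <;> simp_all [adj_comm, mul_comm]
  simp only [productWeight, weightedDegree, hpoint, sum_add_distrib, sum_ite_eq', sum_ite_irrel,
    mem_univ, if_true, sum_const_zero, ← mul_sum, sum_sub_distrib]
  ring

section Extremal

variable [LinearOrder R] [IsStrictOrderedRing R] {W G} {ℓ : ℕ} {s t u : V}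

variable (W G) in
def IsProductWeightMaximal (ℓ : ℕ) : Prop :=
  G.CliqueFree ℓ ∧
    ∀ (H : SimpleGraph V) [DecidableRel H.Adj], H.CliqueFree ℓ →
      H.productWeight W ≤ G.productWeight W

namespace IsProductWeightMaximal

variable (h : G.IsProductWeightMaximal W ℓ) (hW : ∀ v, 0 < W v)
include h hW

lemma weightedDegree_le_of_not_adj (hn : ¬G.Adj s t) :
    G.weightedDegree W s ≤ G.weightedDegree W t := by
  have hle := h.2 _ (h.1.replaceVertex s t)
  rw [productWeight_replaceVertex_of_not_adj _ _ hn] at hle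
  nlinarith [hW t]

lemma weightedDegree_eq_of_not_adj (hn : ¬G.Adj s t) :
    G.weightedDegree W s = G.weightedDegree W t :=
  (h.weightedDegree_le_of_not_adj hW hn).antisymm
    (h.weightedDegree_le_of_not_adj hW fun hts => hn hts.symm)

lemma not_adj_trans (hts : ¬G.Adj t s) (hsu : ¬G.Adj s u) : ¬G.Adj t u := by
  intro htu
  have hst : ¬G.Adj s t := fun hst => hts hst.symm
  have hne : s ≠ t := by rintro rfl; exact hsu htu
  have dst := h.weightedDegree_eq_of_not_adj hW hst
  have dsu := h.weightedDegree_eq_of_not_adj hW hsu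
  have hsu' : ¬(G.replaceVertex s t).Adj s u :=
    (G.adj_replaceVertex_iff_of_ne s hne htu.ne').not.mpr hsu
  have hle := h.2 _ ((h.1.replaceVertex s t).replaceVertex s u)
  rw [productWeight_replaceVertex_of_not_adj _ _ hsu',
    productWeight_replaceVertex_of_not_adj _ _ hst, weightedDegree_replaceVertex_of_ne _ _ hne,
    weightedDegree_replaceVertex_of_ne _ _ htu.ne'] at hle
  simp only [G.irrefl, hst, G.adj_comm u s, hsu, htu.symm, if_true, if_false, ← dst, ← dsu]
    at hle
  nlinarith [mul_pos (hW t) (hW u)]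

end IsProductWeightMaximal

end Extremal

end SimpleGraph

open scoped Classical in
theorem product_weight_extremal_complete_multipartite_general (n ℓ : ℕ)
    (W : Fin n → ℝ) (hW : ∀ v, 0 < W v)
    (G : SimpleGraph (Fin n)) (hG : G.CliqueFree ℓ)
    (hmax : ∀ H : SimpleGraph (Fin n), H.CliqueFree ℓ →
      (∑ u : Fin n, ∑ v : Fin n, if H.Adj u v then W u * W v else 0) / 2 ≤
      (∑ u : Fin n, ∑ v : Fin n, if G.Adj u v then W u * W v else 0) / 2) :
    ¬ ∃ x y z : Fin n, x ≠ y ∧ x ≠ z ∧ G.Adj y z ∧ ¬ G.Adj x y ∧ ¬ G.Adj x z := by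
  rintro ⟨x, y, z, -, -, hyz, hxy, hxz⟩
  have hG' : G.IsProductWeightMaximal W ℓ := by
    refine ⟨hG, fun H _ hH => ?_⟩
    have hle := hmax H hH
    unfold SimpleGraph.productWeight
    convert (div_le_div_iff_of_pos_right two_pos).1 hle
  exact hG'.not_adj_trans hW (fun hyx => hxy hyx.symm) hxz hyz

open scoped Classical in
/-- For `n ≥ 1`, `ℓ ≥ 3` and a strictly positive vertex-weight function `W`,
any `K_ℓ`-free graph `G` on `n` vertices maximizing the product-edge-weight
`w_Π(G) = ∑_{uv ∈ E(G)} W(u)W(v)` is complete multipartite: there are no three vertices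
`x, y, z` with `yz` an edge but `xy` and `xz` both non-edges. -/
theorem product_weight_extremal_complete_multipartite (n ℓ : ℕ) (hn : 1 ≤ n) (hℓ : 3 ≤ ℓ)
    (W : Fin n → ℝ) (hW : ∀ v, 0 < W v)
    (G : SimpleGraph (Fin n)) (hG : G.CliqueFree ℓ)
    (hmax : ∀ H : SimpleGraph (Fin n), H.CliqueFree ℓ →
      (∑ u : Fin n, ∑ v : Fin n, if H.Adj u v then W u * W v else 0) / 2 ≤
      (∑ u : Fin n, ∑ v : Fin n, if G.Adj u v then W u * W v else 0) / 2) :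
    ¬ ∃ x y z : Fin n, x ≠ y ∧ x ≠ z ∧ G.Adj y z ∧ ¬ G.Adj x y ∧ ¬ G.Adj x z :=
  product_weight_extremal_complete_multipartite_general n ℓ W hW G hG hmax
end

section
/- Let ℓ ≥ 2 and let W be a vertex-weight function on vertices v_1, …, v_n with W(v_1) ≥ W(v_2) ≥ … ≥ W(v_n) ≥ 0. Then the min-edge-weight extremal number ex(n, w_min, K_ℓ) — the maximum of Σ_{v_i v_j ∈ E(G)} min{W(v_i), W(v_j)} over all K_ℓ-free graphs G on {v_1, …, v_n} — equals w_min(B_ℓ(v_1, …, v_n)), the total min-edge-weight of the complete (ℓ−1)-partite graph B_ℓ(v_1, …, v_n) in which v_i and v_j are adjacent if and only if i ≢ j (mod ℓ−1). -/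
/-!
Peel off the smallest weight `w = W(v_n)`: since `min (a + w) (b + w) = min a b + w`, the weight
of `G` is `w · e(G)` plus its weight for `W - w`. Turán's theorem bounds `e(G)` by the edge count
of the Turán graph, and `W - w` vanishes at `v_n`, so the second term only sees `G` on
`v_1, …, v_{n-1}`, where induction applies. The Turán graph `turanGraph n r` is `B_{r+1}` on the
nose, and its restriction to the first `n - 1` vertices is again a Turán graph.
-/

open Finset

/-- The complete `(ℓ-1)`-partite graph `B_ℓ(v_1, …, v_n)` on vertices indexed `0, …, n-1`,
where vertex `i` is placed in part `i mod (ℓ-1)`: vertices `i` and `j` are adjacent iff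
`i ≢ j (mod ℓ-1)`. (With `r = ℓ - 1` parts.) -/
def modPartiteGraph (n r : ℕ) : SimpleGraph (Fin n) where
  Adj i j := (i : ℕ) % r ≠ (j : ℕ) % r
  symm := ⟨fun _ _ h => Ne.symm h⟩
  loopless := ⟨fun _ h => h rfl⟩

namespace SimpleGraph

variable {V U : Type*} [Fintype V] [Fintype U]

open scoped Classical in
/-- The `w_min`-weight of `G`, counted over ordered pairs, i.e. twice `w_min(G)`. -/
noncomputable def minWeightSum (G : SimpleGraph V) (W : V → ℝ) : ℝ :=
  ∑ i, ∑ j, if G.Adj i j then min (W i) (W j) else 0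

theorem minWeightSum_add_const (G : SimpleGraph V) [DecidableRel G.Adj] (W : V → ℝ) (c : ℝ) :
    G.minWeightSum (fun v => W v + c) = G.minWeightSum W + 2 * c * #G.edgeFinset := by
  classical
  obtain rfl : ‹DecidableRel G.Adj› = fun _ _ => Classical.propDecidable _ :=
    Subsingleton.elim _ _
  have hdeg : ∀ i, (∑ j, if G.Adj i j then c else 0) = c * G.degree i := by
    intro i
    rw [Finset.sum_ite, Finset.sum_const_zero, add_zero, Finset.sum_const, nsmul_eq_mul,
      ← card_neighborFinset_eq_degree, neighborFinset_eq_filter, mul_comm]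
  have hsum : ∑ i, c * (G.degree i : ℝ) = 2 * c * #G.edgeFinset := by
    rw [← Finset.mul_sum, ← Nat.cast_sum, sum_degrees_eq_twice_card_edges]
    push_cast; ring
  simp only [minWeightSum, min_add_add_right, ite_add_zero, Finset.sum_add_distrib, hdeg, hsum]

open scoped Classical in
theorem minWeightSum_comap (G : SimpleGraph U) {f : V → U} (hf : Function.Injective f)
    {W : U → ℝ} (hW : ∀ u ∉ Set.range f, W u = 0) (hnn : ∀ u, 0 ≤ W u) :
    (G.comap f).minWeightSum (W ∘ f) = G.minWeightSum W := by
  unfold minWeightSum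
  refine Fintype.sum_of_injective f hf _ _ (fun u hu => ?_) (fun v => ?_)
  · refine Finset.sum_eq_zero fun u' _ => ?_
    simp [hW u hu, min_eq_left (hnn u')]
  · refine Fintype.sum_of_injective f hf _ _ (fun u hu => ?_) (fun v' => ?_)
    · simp [hW u hu, min_eq_right (hnn (f v))]
    · simp

open scoped Classical in
theorem minWeightSum_le_turanGraph {r : ℕ} (hr : 0 < r) {n : ℕ} (G : SimpleGraph (Fin n))
    (hG : G.CliqueFree (r + 1)) (W : Fin n → ℝ) (hW : Antitone W) (hnn : ∀ i, 0 ≤ W i) :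
    G.minWeightSum W ≤ (turanGraph n r).minWeightSum W := by
  induction n with
  | zero => simp [minWeightSum]
  | succ n ih =>
    set w := W (Fin.last n)
    set U : Fin (n + 1) → ℝ := fun i => W i - w
    have hU : Antitone U := fun i j hij => sub_le_sub_right (hW hij) w
    have hUnn : ∀ i, 0 ≤ U i := fun i => sub_nonneg.2 (hW (Fin.le_last i))
    have hUlast : ∀ i ∉ Set.range (Fin.castSucc : Fin n → Fin (n + 1)), U i = 0 := by
      intro i hi
      obtain ⟨j, rfl⟩ | rfl := Fin.eq_castSucc_or_eq_last i
      · exact absurd ⟨j, rfl⟩ hi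
      · exact sub_self w
    have hWU : W = fun i => U i + w := by simp [U]
    have hw : 0 ≤ w := hnn _
    have hturan : #G.edgeFinset ≤ #(turanGraph (n + 1) r).edgeFinset :=
      (isTuranMaximal_turanGraph hr).2 hG
    have hTcomap : (turanGraph (n + 1) r).comap Fin.castSucc = turanGraph n r := rfl
    calc G.minWeightSum W
        = (G.comap Fin.castSucc).minWeightSum (U ∘ Fin.castSucc) + 2 * w * #G.edgeFinset := by
          rw [hWU, minWeightSum_add_const,
            minWeightSum_comap G (Fin.castSucc_injective n) hUlast hUnn]
      _ ≤ (turanGraph n r).minWeightSum (U ∘ Fin.castSucc)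
            + 2 * w * #(turanGraph (n + 1) r).edgeFinset := by
          gcongr
          · exact ih _ (hG.comap (Embedding.comap Fin.castSuccEmb G).isContained) _
              (hU.comp_monotone Fin.strictMono_castSucc.monotone) (fun _ => hUnn _)
      _ = (turanGraph (n + 1) r).minWeightSum W := by
          rw [hWU, minWeightSum_add_const, ← hTcomap,
            minWeightSum_comap _ (Fin.castSucc_injective n) hUlast hUnn]

end SimpleGraph

open scoped Classical in
/-- For `ℓ ≥ 2` and vertex weights `W(v_1) ≥ … ≥ W(v_n) ≥ 0` (vertex `i : Fin n`
standing for `v_{i+1}`), the min-edge-weight extremal number `ex(n, w_min, K_ℓ)` — the maximum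
of `∑_{v_i v_j ∈ E(G)} min(W(v_i), W(v_j))` over `K_ℓ`-free graphs `G` on the `n` vertices —
equals the total min-edge-weight of `B_ℓ(v_1, …, v_n)`. Graph weights are expressed as half
the sum over ordered pairs. -/
theorem min_weight_turan (n ℓ : ℕ) (hℓ : 2 ≤ ℓ) (W : Fin n → ℝ)
    (hmono : ∀ i j : Fin n, i ≤ j → W j ≤ W i) (hnn : ∀ i, 0 ≤ W i) :
    IsGreatest {x : ℝ | ∃ G : SimpleGraph (Fin n), G.CliqueFree ℓ ∧
        x = (∑ i : Fin n, ∑ j : Fin n, if G.Adj i j then min (W i) (W j) else 0) / 2}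
      ((∑ i : Fin n, ∑ j : Fin n,
        if (modPartiteGraph n (ℓ - 1)).Adj i j then min (W i) (W j) else 0) / 2) := by
  obtain ⟨r, rfl⟩ : ∃ r, ℓ = r + 1 := ⟨ℓ - 1, by omega⟩
  have hr : 0 < r := by omega
  refine ⟨⟨SimpleGraph.turanGraph n r, SimpleGraph.turanGraph_cliqueFree hr, rfl⟩, ?_⟩
  rintro x ⟨G, hG, rfl⟩
  exact div_le_div_of_nonneg_right
    (SimpleGraph.minWeightSum_le_turanGraph hr G hG W hmono hnn) zero_le_two
end

section
/- Let ℓ ≥ 2, let W be a vertex-weight function on v_1, …, v_n with W(v_1) ≥ … ≥ W(v_n) ≥ 0, and let t be an integer with 0 ≤ t ≤ t_{n,ℓ−1}, where t_{n,ℓ−1} is the number of edges of the Turán graph T_{n,ℓ−1}. Then there exists a subgraph B of B_ℓ(v_1, …, v_n) with exactly t edges such that w_min(B) ≥ w_min(G) for every K_ℓ-free graph G on {v_1, …, v_n} having exactly t edges. -/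
/-!
Order the vertices by decreasing weight. The min-weight of an edge is then the weight of its
later endpoint, so `w_min(G)` is a nonnegative combination of the numbers `e_m(G)` of edges
spanned by the first `m` vertices (peel off the layers of the antitone, nonnegative `W`), and
it is monotone in this profile. For a `K_ℓ`-free `G` with `t` edges, Turán's theorem applied to
the first `m` vertices gives `e_m(G) ≤ min t e_m(B_ℓ)`, since `B_ℓ` restricted to them is
`T_{m,ℓ-1}`. Taking the first `t` edges of `B_ℓ` in the order of their later endpoint yields a
`B` with `e_m(B) = min t e_m(B_ℓ)` for every `m` at once.
-/

open Finset

namespace Finset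

variable {α β : Type*} [LinearOrder β]

theorem exists_subset_card_eq_and_card_filter_lt_eq_min (s : Finset α) (ρ : α → β) {t : ℕ}
    (ht : t ≤ #s) :
    ∃ u ⊆ s, #u = t ∧ ∀ c, #{x ∈ u | ρ x < c} = min t #{x ∈ s | ρ x < c} := by
  classical
  induction t generalizing s with
  | zero => exact ⟨∅, empty_subset _, rfl, fun c => by simp⟩
  | succ t ih =>
    obtain ⟨x₀, hx₀, hmin⟩ := s.exists_min_image ρ (card_pos.mp (by omega))
    obtain ⟨u, hus, hu, hfilter⟩ := ih (s.erase x₀) (by rw [card_erase_of_mem hx₀]; omega)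
    have hx₀u : x₀ ∉ u := fun h => by simpa using hus h
    have hsub : insert x₀ u ⊆ s := insert_subset hx₀ (hus.trans (erase_subset _ _))
    refine ⟨insert x₀ u, hsub, by rw [card_insert_of_notMem hx₀u, hu], fun c => ?_⟩
    by_cases hc : ρ x₀ < c
    · have hx₀c : x₀ ∈ {x ∈ s | ρ x < c} := mem_filter.mpr ⟨hx₀, hc⟩
      have hpos : 0 < #{x ∈ s | ρ x < c} := card_pos.mpr ⟨x₀, hx₀c⟩
      rw [filter_insert, if_pos hc, card_insert_of_notMem (fun h => hx₀u (mem_filter.mp h).1),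
        hfilter, filter_erase, card_erase_of_mem hx₀c]
      omega
    · have hnone : ∀ x ∈ s, ¬ ρ x < c := fun x hx h => hc ((hmin x hx).trans_lt h)
      rw [filter_false_of_mem hnone, filter_false_of_mem fun x hx => hnone x (hsub hx)]
      simp

variable {R : Type*} [AddCommGroup R] [LinearOrder R] [IsOrderedAddMonoid R]

theorem sum_eq_card_nsmul_add_sum_filter_lt {s : Finset α} {ρ : α → β} {W : β → R}
    (hW : Antitone W) {a : β} (hs : ∀ x ∈ s, ρ x ≤ a) :
    ∑ x ∈ s, W (ρ x) = #s • W a + ∑ x ∈ s with ρ x < a, max (W (ρ x) - W a) 0 := by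
  have hcut : ∀ x ∈ s, (if ρ x < a then max (W (ρ x) - W a) 0 else 0) = W (ρ x) - W a := by
    intro x hx
    split_ifs with h
    · exact max_eq_left (sub_nonneg.mpr (hW h.le))
    · rw [le_antisymm (hs x hx) (not_lt.mp h), sub_self]
  rw [sum_filter, sum_congr rfl hcut, sum_sub_distrib, sum_const]
  abel

theorem sum_le_sum_of_card_filter_lt_le {s t : Finset α} {ρ : α → β} {W : β → R}
    (hW : Antitone W) (hW₀ : ∀ b, 0 ≤ W b) (hcard : #s ≤ #t)
    (hlt : ∀ c, #{x ∈ s | ρ x < c} ≤ #{x ∈ t | ρ x < c}) :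
    ∑ x ∈ s, W (ρ x) ≤ ∑ x ∈ t, W (ρ x) := by
  classical
  suffices key : ∀ (ranks : Finset β) (s t : Finset α) (W : β → R), Antitone W →
      (∀ b, 0 ≤ W b) → (∀ x ∈ s ∪ t, ρ x ∈ ranks) → #s ≤ #t →
      (∀ c, #{x ∈ s | ρ x < c} ≤ #{x ∈ t | ρ x < c}) →
      ∑ x ∈ s, W (ρ x) ≤ ∑ x ∈ t, W (ρ x) from
    key ((s ∪ t).image ρ) s t W hW hW₀ (fun x hx => mem_image_of_mem ρ hx) hcard hlt
  intro ranks
  induction ranks using Finset.induction_on_max with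
  | empty =>
    intro s t W _ hW₀ hranks _ _
    have hs : s = ∅ := eq_empty_of_forall_notMem fun x hx => by
      simpa using hranks x (mem_union_left t hx)
    simpa [hs] using sum_nonneg fun x _ => hW₀ (ρ x)
  | insert a ranks hlower ih =>
    intro s t W hW hW₀ hranks hcard hlt
    have hle : ∀ x ∈ s ∪ t, ρ x ≤ a := fun x hx => by
      rcases mem_insert.mp (hranks x hx) with h | h
      · exact h.le
      · exact (hlower _ h).le
    -- Peel off the constant layer `W a` at the top rank `a`; what is left is the weight
    -- `max (W - W a) 0`, which vanishes there, so only the lower ranks remain.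
    rw [sum_eq_card_nsmul_add_sum_filter_lt hW fun x hx => hle x (mem_union_left t hx),
      sum_eq_card_nsmul_add_sum_filter_lt hW fun x hx => hle x (mem_union_right s hx)]
    refine add_le_add (nsmul_le_nsmul_left (hW₀ a) hcard)
      (ih _ _ (fun b => max (W b - W a) 0) ?_ ?_ ?_ (hlt a) fun c => ?_)
    · exact fun b c hbc => max_le_max (sub_le_sub_right (hW hbc) _) le_rfl
    · exact fun b => le_max_right _ _
    · intro x hx
      simp only [mem_union, mem_filter] at hx
      have hxa : ρ x < a := by rcases hx with h | h <;> exact h.2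
      have hx' : x ∈ s ∪ t := by rcases hx with h | h <;> simp [h.1]
      exact (mem_insert.mp (hranks x hx')).resolve_left hxa.ne
    · simp only [filter_filter, ← lt_min_iff]
      exact hlt (min a c)

end Finset

namespace SimpleGraph

variable {V : Type*} [Fintype V]

theorem two_mul_card_filter_edgeFinset (G : SimpleGraph V) [DecidableRel G.Adj]
    (q : Sym2 V → Prop) [DecidablePred q] :
    2 * #{e ∈ G.edgeFinset | q e} = #{p : V × V | G.Adj p.1 p.2 ∧ q s(p.1, p.2)} := by
  classical
  have := two_mul_card_edgeFinset (G.deleteEdges {e | ¬ q e})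
  convert this using 2
  · congr 1; ext e; simp [and_comm]
  · ext ⟨x, y⟩; simp

theorem card_filter_sup_lt_eq_card_edgeFinset_comap {n : ℕ} (G : SimpleGraph (Fin n))
    [DecidableRel G.Adj] (c : Fin n) :
    #{e ∈ G.edgeFinset | e.sup < c} = #(G.comap (Fin.castLE c.isLt.le)).edgeFinset := by
  classical
  rw [← card_map (Fin.castLEEmb c.isLt.le).sym2Map]
  congr 1
  ext e
  induction e using Sym2.inductionOn with | _ a b => ?_
  simp only [mem_map, mem_filter, mem_edgeFinset, Sym2.exists, mem_edgeSet]
  constructor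
  · rintro ⟨hab, hc⟩
    rw [Sym2.sup_mk, sup_lt_iff] at hc
    exact ⟨⟨a, hc.1⟩, ⟨b, hc.2⟩, hab, rfl⟩
  · rintro ⟨x, y, hxy, he⟩
    have hx : Fin.castLE c.isLt.le x < c := x.isLt
    have hy : Fin.castLE c.isLt.le y < c := y.isLt
    rcases Sym2.eq_iff.mp he with ⟨rfl, rfl⟩ | ⟨rfl, rfl⟩
    · exact ⟨hxy, sup_lt_iff.mpr ⟨hx, hy⟩⟩
    · exact ⟨hxy.symm, sup_lt_iff.mpr ⟨hy, hx⟩⟩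

theorem CliqueFree.card_filter_sup_lt_le_turanGraph {n r : ℕ} (hr : 0 < r)
    {G : SimpleGraph (Fin n)} [DecidableRel G.Adj] (hG : G.CliqueFree (r + 1)) (c : Fin n) :
    #{e ∈ G.edgeFinset | e.sup < c} ≤ #{e ∈ (turanGraph n r).edgeFinset | e.sup < c} := by
  rw [card_filter_sup_lt_eq_card_edgeFinset_comap, card_filter_sup_lt_eq_card_edgeFinset_comap]
  convert (isTuranMaximal_turanGraph (n := c) hr).2
    (hG.comap (Embedding.comap (Fin.castLEEmb c.isLt.le) G).isContained) <;> rfl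

variable [LinearOrder V]

theorem sum_adj_min_eq_sum_sup {R : Type*} [AddCommMonoid R] [LinearOrder R] (G : SimpleGraph V)
    [DecidableRel G.Adj] {W : V → R} (hW : Antitone W) :
    ∑ i, ∑ j, (if G.Adj i j then min (W i) (W j) else 0) =
      ∑ p : V × V with G.Adj p.1 p.2, W (p.1 ⊔ p.2) := by
  rw [sum_filter, ← univ_product_univ, sum_product]
  simp only [hW.map_max]

theorem sum_adj_min_le_of_card_filter_sup_lt_le {R : Type*} [AddCommGroup R] [LinearOrder R]
    [IsOrderedAddMonoid R] {G H : SimpleGraph V} [DecidableRel G.Adj] [DecidableRel H.Adj]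
    {W : V → R} (hW : Antitone W) (hW₀ : ∀ v, 0 ≤ W v)
    (hcard : #G.edgeFinset ≤ #H.edgeFinset)
    (hlt : ∀ c, #{e ∈ G.edgeFinset | e.sup < c} ≤ #{e ∈ H.edgeFinset | e.sup < c}) :
    ∑ i, ∑ j, (if G.Adj i j then min (W i) (W j) else 0) ≤
      ∑ i, ∑ j, (if H.Adj i j then min (W i) (W j) else 0) := by
  rw [sum_adj_min_eq_sum_sup G hW, sum_adj_min_eq_sum_sup H hW]
  refine sum_le_sum_of_card_filter_lt_le hW hW₀ ?_ fun c => ?_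
  · have hG := two_mul_card_filter_edgeFinset G fun _ => True
    have hH := two_mul_card_filter_edgeFinset H fun _ => True
    simp only [filter_true, and_true] at hG hH
    omega
  · have hG := two_mul_card_filter_edgeFinset G (·.sup < c)
    have hH := two_mul_card_filter_edgeFinset H (·.sup < c)
    simp only [Sym2.sup_mk] at hG hH
    rw [filter_filter, filter_filter]
    convert Nat.mul_le_mul_left 2 (hlt c) using 1
    exacts [hG.symm, hH.symm]

end SimpleGraph

open SimpleGraph

open scoped Classical in
/-- For `ℓ ≥ 2`, vertex weights `W(v_1) ≥ … ≥ W(v_n) ≥ 0` (vertex `i : Fin n`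
standing for `v_{i+1}`), and `0 ≤ t ≤ t_{n,ℓ-1}` (the number of edges of the Turán graph
`T_{n,ℓ-1}`, which is `modPartiteGraph n (ℓ-1)`), there is a subgraph `B` of
`B_ℓ(v_1, …, v_n) = modPartiteGraph n (ℓ-1)` with exactly `t` edges such that
`w_min(B) ≥ w_min(G)` for every `K_ℓ`-free graph `G` on the `n` vertices with exactly
`t` edges. Graph weights are expressed as half the sum over ordered pairs. -/
theorem min_weight_turan_fixed_edges (n ℓ t : ℕ) (hℓ : 2 ≤ ℓ) (W : Fin n → ℝ)
    (hmono : ∀ i j : Fin n, i ≤ j → W j ≤ W i) (hnn : ∀ i, 0 ≤ W i)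
    (ht : t ≤ (modPartiteGraph n (ℓ - 1)).edgeSet.ncard) :
    ∃ B : SimpleGraph (Fin n), B ≤ modPartiteGraph n (ℓ - 1) ∧ B.edgeSet.ncard = t ∧
      ∀ G : SimpleGraph (Fin n), G.CliqueFree ℓ → G.edgeSet.ncard = t →
        (∑ i : Fin n, ∑ j : Fin n, if G.Adj i j then min (W i) (W j) else 0) / 2 ≤
        (∑ i : Fin n, ∑ j : Fin n, if B.Adj i j then min (W i) (W j) else 0) / 2 := by
  have hr : 0 < ℓ - 1 := by omega
  have hT : modPartiteGraph n (ℓ - 1) = turanGraph n (ℓ - 1) := rfl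
  rw [hT, ← coe_edgeFinset, Set.ncard_coe_finset] at ht
  obtain ⟨u, huT, hu, hfilter⟩ := exists_subset_card_eq_and_card_filter_lt_eq_min _ Sym2.sup ht
  obtain ⟨B, hBT, hBu⟩ : ∃ B ≤ turanGraph n (ℓ - 1), B.edgeSet = u :=
    ⟨_, deleteEdges_le _, by
      rw [edgeSet_deleteEdges, Set.sdiff_sdiff_cancel_left]
      simpa [← coe_subset] using huT⟩
  replace hBu : B.edgeFinset = u := coe_injective (by rw [coe_edgeFinset, hBu])
  refine ⟨B, hBT, ?_, fun G hG hGt => ?_⟩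
  · rw [← coe_edgeFinset, hBu, Set.ncard_coe_finset, hu]
  rw [← coe_edgeFinset, Set.ncard_coe_finset] at hGt
  have hG' : G.CliqueFree (ℓ - 1 + 1) := by rwa [Nat.sub_add_cancel (by omega)]
  gcongr ?_ / 2
  refine sum_adj_min_le_of_card_filter_sup_lt_le hmono hnn ?_ fun c => ?_
  · rw [hBu, hGt, hu]
  · rw [hBu, hfilter c]
    exact le_min ((card_filter_le _ _).trans hGt.le) (hG'.card_filter_sup_lt_le_turanGraph hr c)
end

section
/- Let r ≥ ℓ−1 ≥ 1 and let k_1, …, k_r be positive integers. Among all K_ℓ-free subgraphs of the complete multipartite graph K_{k_1, …, k_r} with the maximum number of edges, there exists one, G, with the property that for every pair of distinct parts A_i, A_j of K_{k_1, …, k_r}, either every edge between A_i and A_j belongs to G or no edge between A_i and A_j belongs to G. -/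
/-!
Zykov symmetrization. Let `G` be a `K_ℓ`-free subgraph of a host graph `H` with the most edges,
and let `s, t` have the same `H`-neighbourhood. Then `s, t` are not adjacent, and replacing `t`
by a clone of `s` (or `s` by a clone of `t`) gives again a `K_ℓ`-free subgraph of `H`, with
`deg s - deg t` more edges. Maximality in both directions forces `deg s = deg t`, so the clone is
again extremal. Fixing a representative of each class of `H`-twins, an extremal graph with the
fewest vertices not yet `G`-twin to their representative therefore has none: cloning the
representative over such a vertex would fix it without breaking any other. In `K_{k_1,…,k_r}`
the classes of twins are the parts, and two parts consisting of `G`-twins are joined either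
completely or not at all.
-/

open Finset

namespace SimpleGraph

variable {V : Type*} {G H : SimpleGraph V} {s t : V} {ℓ : ℕ}

lemma not_adj_of_neighborSet_eq (h : H.neighborSet s = H.neighborSet t) : ¬H.Adj s t :=
  fun hst ↦ H.irrefl (show t ∈ H.neighborSet t from h ▸ hst)

lemma forall_adj_or_forall_not_adj {α β : Type*} (f : α → V) (g : β → V)
    (hf : ∀ a a', G.neighborSet (f a) = G.neighborSet (f a'))
    (hg : ∀ b b', G.neighborSet (g b) = G.neighborSet (g b')) :
    (∀ a b, G.Adj (f a) (g b)) ∨ ∀ a b, ¬G.Adj (f a) (g b) := by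
  refine or_iff_not_imp_right.2 fun h a' b' ↦ ?_
  push Not at h
  obtain ⟨a, b, hab⟩ := h
  have hab' : g b ∈ G.neighborSet (f a') := hf a a' ▸ hab
  have hba' : f a' ∈ G.neighborSet (g b') := hg b b' ▸ hab'.symm
  exact hba'.symm

lemma neighborSet_completeMultipartiteGraph_mk {ι : Type*} (V : ι → Type*) (i : ι) (a b : V i) :
    (completeMultipartiteGraph V).neighborSet ⟨i, a⟩ =
      (completeMultipartiteGraph V).neighborSet ⟨i, b⟩ := by
  ext; simp

section ReplaceVertex

variable [DecidableEq V]

lemma replaceVertex_le (hG : G ≤ H) (hst : ∀ w, H.Adj s w → H.Adj t w) :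
    G.replaceVertex s t ≤ H := by
  intro v w hvw
  simp only [replaceVertex] at hvw
  split_ifs at hvw with hv hw hw
  · exact hv ▸ hst w (hG hvw)
  · exact hw ▸ (hst v (hG hvw).symm).symm
  · exact hG hvw

lemma neighborSet_replaceVertex_left_eq_right (G : SimpleGraph V) (s t : V) :
    (G.replaceVertex s t).neighborSet s = (G.replaceVertex s t).neighborSet t := by
  ext w
  simp only [mem_neighborSet, replaceVertex]
  split_ifs <;> simp_all

lemma neighborSet_replaceVertex_eq_of_eq {v w : V} (hv : v ≠ t) (hw : w ≠ t)
    (hvw : G.neighborSet v = G.neighborSet w) :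
    (G.replaceVertex s t).neighborSet v = (G.replaceVertex s t).neighborSet w := by
  ext x
  simp only [mem_neighborSet, replaceVertex, hv, hw, if_false]
  simp only [Set.ext_iff, mem_neighborSet] at hvw
  split_ifs <;> simp [hvw]

lemma card_edgeFinset_replaceVertex_add_degree [Fintype V] [DecidableRel G.Adj]
    (hn : ¬G.Adj s t) :
    #(G.replaceVertex s t).edgeFinset + G.degree t = #G.edgeFinset + G.degree s := by
  have := G.degree_le_card_edgeFinset t
  rw [card_edgeFinset_replaceVertex_of_not_adj G hn]
  omega

lemma IsExtremal.replaceVertex [Fintype V] [DecidableRel G.Adj]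
    (hG : G.IsExtremal fun G' ↦ G' ≤ H ∧ G'.CliqueFree ℓ)
    (hst : H.neighborSet s = H.neighborSet t) :
    (G.replaceVertex s t).IsExtremal fun G' ↦ G' ≤ H ∧ G'.CliqueFree ℓ := by
  have hp : ∀ {a b}, H.neighborSet a = H.neighborSet b →
      G.replaceVertex a b ≤ H ∧ (G.replaceVertex a b).CliqueFree ℓ := fun hab ↦
    ⟨replaceVertex_le hG.1.1 fun w hw ↦ (show w ∈ H.neighborSet _ from hab ▸ hw),
      hG.1.2.replaceVertex _ _⟩
  have hn : ¬G.Adj s t := fun h ↦ not_adj_of_neighborSet_eq hst (hG.1.1 h)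
  have e_st := card_edgeFinset_replaceVertex_add_degree hn
  have e_ts := card_edgeFinset_replaceVertex_add_degree (s := t) (t := s) fun h ↦ hn h.symm
  have := hG.2 (hp hst.symm)
  exact ⟨hp hst, fun G' _ hG' ↦ (hG.2 hG').trans (by omega)⟩

end ReplaceVertex

theorem exists_isExtremal_neighborSet_rep_eq [Fintype V] (rep : V → V)
    (hrep : ∀ x, H.neighborSet (rep x) = H.neighborSet x) (hrep_idem : ∀ x, rep (rep x) = rep x)
    (hne : ∃ G : SimpleGraph V, G ≤ H ∧ G.CliqueFree ℓ) :
    ∃ G : SimpleGraph V, ∃ _ : DecidableRel G.Adj,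
      G.IsExtremal (fun G' ↦ G' ≤ H ∧ G'.CliqueFree ℓ) ∧
      ∀ x, G.neighborSet (rep x) = G.neighborSet x := by
  classical
  obtain ⟨G₀, _, hG₀⟩ := (exists_isExtremal_iff_exists _).2 hne
  let unfinished (G : SimpleGraph V) : Finset V :=
    {x | G.neighborSet (rep x) ≠ G.neighborSet x}
  obtain ⟨G, hG, hmin⟩ := Set.exists_min_image
    {G : SimpleGraph V | G.IsExtremal fun G' ↦ G' ≤ H ∧ G'.CliqueFree ℓ}
    (fun G ↦ #(unfinished G)) (Set.toFinite _) ⟨G₀, by rw [Set.mem_ofPred_eq]; convert hG₀⟩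
  refine ⟨G, inferInstance, hG, ?_⟩
  by_contra! ⟨x, hx⟩
  have hG' := IsExtremal.replaceVertex hG (hrep x)
  have hsub : unfinished (G.replaceVertex (rep x) x) ⊂ unfinished G := by
    refine (ssubset_iff_of_subset fun y ↦ ?_).2 ⟨x, by simpa [unfinished] using hx, ?_⟩
    · contrapose!
      simp only [unfinished, mem_filter, mem_univ, true_and, not_not]
      intro hy
      have hyx : y ≠ x := by rintro rfl; exact hx hy
      have hryx : rep y ≠ x := by rintro rfl; exact hx (by rw [hrep_idem])
      exact neighborSet_replaceVertex_eq_of_eq hryx hyx hy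
    · simp [unfinished, neighborSet_replaceVertex_left_eq_right]
  exact (card_lt_card hsub).not_ge (hmin _ (by rw [Set.mem_ofPred_eq]; convert hG'))

theorem exists_isExtremal_neighborSet_eq [Fintype V]
    (hne : ∃ G : SimpleGraph V, G ≤ H ∧ G.CliqueFree ℓ) :
    ∃ G : SimpleGraph V, ∃ _ : DecidableRel G.Adj,
      G.IsExtremal (fun G' ↦ G' ≤ H ∧ G'.CliqueFree ℓ) ∧
      ∀ x y, H.neighborSet x = H.neighborSet y → G.neighborSet x = G.neighborSet y := by
  let twins := Setoid.ker H.neighborSet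
  let rep (x : V) : V := (Quotient.mk twins x).out
  have hrep (x : V) : H.neighborSet (rep x) = H.neighborSet x := Quotient.mk_out (s := twins) x
  have hrep_eq {x y : V} (h : H.neighborSet x = H.neighborSet y) : rep x = rep y :=
    congrArg Quotient.out (Quotient.sound (s := twins) h)
  obtain ⟨G, _, hG, hGrep⟩ :=
    exists_isExtremal_neighborSet_rep_eq rep hrep (fun x ↦ hrep_eq (hrep x)) hne
  exact ⟨G, _, hG, fun x y h ↦ by rw [← hGrep x, ← hGrep y, hrep_eq h]⟩

end SimpleGraph

open SimpleGraph

theorem multipartite_turan_blocks_general (r ℓ : ℕ) (hℓ : 2 ≤ ℓ) (k : Fin r → ℕ) :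
    ∃ G : SimpleGraph (Σ i, Fin (k i)),
      G ≤ SimpleGraph.completeMultipartiteGraph (fun i => Fin (k i)) ∧
      G.CliqueFree ℓ ∧
      (∀ G' : SimpleGraph (Σ i, Fin (k i)),
        G' ≤ SimpleGraph.completeMultipartiteGraph (fun i => Fin (k i)) → G'.CliqueFree ℓ →
        G'.edgeSet.ncard ≤ G.edgeSet.ncard) ∧
      ∀ i j : Fin r, i ≠ j →
        (∀ (a : Fin (k i)) (b : Fin (k j)), G.Adj ⟨i, a⟩ ⟨j, b⟩) ∨
        (∀ (a : Fin (k i)) (b : Fin (k j)), ¬ G.Adj ⟨i, a⟩ ⟨j, b⟩) := by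
  classical
  obtain ⟨G, _, ⟨⟨hGH, hGℓ⟩, hGmax⟩, htwins⟩ :=
    exists_isExtremal_neighborSet_eq (H := completeMultipartiteGraph fun i ↦ Fin (k i))
      ⟨⊥, bot_le, cliqueFree_bot hℓ⟩
  have hparts (i : Fin r) (a a' : Fin (k i)) : G.neighborSet ⟨i, a⟩ = G.neighborSet ⟨i, a'⟩ :=
    htwins _ _ (neighborSet_completeMultipartiteGraph_mk _ i a a')
  refine ⟨G, hGH, hGℓ, fun G' hG'H hG'ℓ ↦ ?_, fun i j _ ↦
    forall_adj_or_forall_not_adj _ _ (hparts i) (hparts j)⟩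
  rw [← coe_edgeFinset, ← coe_edgeFinset, Set.ncard_coe_finset, Set.ncard_coe_finset]
  exact hGmax ⟨hG'H, hG'ℓ⟩

/-- For `r ≥ ℓ - 1 ≥ 1` and positive part sizes `k_1, …, k_r`, among the
`K_ℓ`-free subgraphs of the complete multipartite graph `K_{k_1,…,k_r}` with the maximum
number of edges, there is one, `G`, such that for every pair of distinct parts `A_i, A_j`,
either all edges between `A_i` and `A_j` are in `G`, or none are. -/
theorem multipartite_turan_blocks (r ℓ : ℕ) (hℓ : 2 ≤ ℓ) (hrℓ : ℓ - 1 ≤ r)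
    (k : Fin r → ℕ) (hk : ∀ i, 1 ≤ k i) :
    ∃ G : SimpleGraph (Σ i, Fin (k i)),
      G ≤ SimpleGraph.completeMultipartiteGraph (fun i => Fin (k i)) ∧
      G.CliqueFree ℓ ∧
      (∀ G' : SimpleGraph (Σ i, Fin (k i)),
        G' ≤ SimpleGraph.completeMultipartiteGraph (fun i => Fin (k i)) → G'.CliqueFree ℓ →
        G'.edgeSet.ncard ≤ G.edgeSet.ncard) ∧
      ∀ i j : Fin r, i ≠ j →
        (∀ (a : Fin (k i)) (b : Fin (k j)), G.Adj ⟨i, a⟩ ⟨j, b⟩) ∨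
        (∀ (a : Fin (k i)) (b : Fin (k j)), ¬ G.Adj ⟨i, a⟩ ⟨j, b⟩) :=
  multipartite_turan_blocks_general r ℓ hℓ k
end

section
/- Let S be a spider with exactly three legs, each of length at least 2, with center vertex v, and let e_1, e_2, e_3 be the three feet of S (the edge of each leg farthest from v). In any legal rectilinear drawing of S in which the segments of e_1, e_2 and e_3 pairwise cross, there exist an edge e ∈ E(S) \ {e_1, e_2, e_3} and an index i ∈ {1,2,3} such that e and e_i share no endpoint, the open segments of e and e_i do not intersect, and e and e_i lie on different legs of S. -/
open Finset

/-- The open straight-line segment drawn for the edge `e` under the drawing `f`. -/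
def edgeSeg {V : Type*} (f : V → ℝ × ℝ) (e : Sym2 V) : Set (ℝ × ℝ) :=
  Sym2.lift ⟨fun u v => openSegment ℝ (f u) (f v),
    fun u v => openSegment_symm ℝ (f u) (f v)⟩ e

/-- A legal rectilinear drawing of the graph `G`: an injective placement of the vertices in
the plane such that no edge passes through (the image of) a vertex it is not incident with,
and no three (open) edge segments pass through a common point. -/
def IsLegalDrawing {V : Type*} (G : SimpleGraph V) (f : V → ℝ × ℝ) : Prop :=
  Function.Injective f ∧
  (∀ u v x : V, G.Adj u v → x ≠ u → x ≠ v → f x ∉ openSegment ℝ (f u) (f v)) ∧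
  ∀ (p : ℝ × ℝ) (e₁ e₂ e₃ : Sym2 V), e₁ ∈ G.edgeSet → e₂ ∈ G.edgeSet → e₃ ∈ G.edgeSet →
    e₁ ≠ e₂ → e₁ ≠ e₃ → e₂ ≠ e₃ →
    ¬ (p ∈ edgeSeg f e₁ ∧ p ∈ edgeSeg f e₂ ∧ p ∈ edgeSeg f e₃)

/-- The spider with three legs of lengths `L 0, L 1, L 2` glued at a center vertex `none`:
vertex `some ⟨i, j⟩` is the vertex at distance `j + 1` from the center on leg `i`. -/
def threeLegSpider (L : Fin 3 → ℕ) : SimpleGraph (Option (Σ i : Fin 3, Fin (L i))) :=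
  SimpleGraph.fromRel (fun x y =>
    (∃ (i : Fin 3) (h : 0 < L i), x = none ∧ y = some ⟨i, ⟨0, h⟩⟩) ∨
    (∃ (i : Fin 3) (j j' : Fin (L i)), (j' : ℕ) = (j : ℕ) + 1 ∧
      x = some ⟨i, j⟩ ∧ y = some ⟨i, j'⟩))

/-- The foot of leg `i` of the spider: the edge of leg `i` farthest from the center. -/
def spiderFoot (L : Fin 3 → ℕ) (hL : ∀ i, 2 ≤ L i) (i : Fin 3) :
    Sym2 (Option (Σ i : Fin 3, Fin (L i))) :=
  s(some ⟨i, ⟨L i - 2, by have := hL i; omega⟩⟩, some ⟨i, ⟨L i - 1, by have := hL i; omega⟩⟩)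

/-- The edge `e` lies on leg `i` of the spider (every non-center endpoint of `e` is a vertex
of leg `i`; each edge of the spider lies on exactly one leg). -/
def OnLeg {L : Fin 3 → ℕ} (e : Sym2 (Option (Σ i : Fin 3, Fin (L i)))) (i : Fin 3) : Prop :=
  ∀ x ∈ e, ∀ (i' : Fin 3) (j : Fin (L i')), x = some ⟨i', j⟩ → i' = i

/-
Suppose the conclusion fails. Then for `i ≠ j` every edge of leg `i` crosses the foot `e_j`, so
walking along leg `i` from the center to the inner endpoint `a_i` of `e_i` we switch sides of
the line of `e_j` at every step. After the same number `L_i - 1` of steps, `a_i` is on the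
center's side of `e_j` exactly when it is on the center's side of `e_k`. In other words,
writing `D_j(x)` for the orientation of `x` relative to `e_j`, the product
`D_j(c) D_k(c) D_j(a_i) D_k(a_i)` is positive. On the other hand, the crossing feet
`e_i, e_j` satisfy `D_j(a_i) D_i(a_j) < 0`; legality excludes the collinear case. The
product of the three positive quantities equals `(D_0(c) D_1(c) D_2(c))²` times the product
of the three negative ones, a contradiction.
-/

open AffineMap

def cross (u v : ℝ × ℝ) : ℝ := u.1 * v.2 - u.2 * v.1

/-- Twice the signed area of the triangle `abc`: positive iff `c` lies to the left of the
directed line `ab`. -/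
def orient (a b c : ℝ × ℝ) : ℝ := cross (b - a) (c - a)

theorem exists_eq_smul_of_cross_eq_zero {u w : ℝ × ℝ} (hu : u ≠ 0) (h : cross u w = 0) :
    ∃ l : ℝ, w = l • u := by
  have hnorm : u.1 ^ 2 + u.2 ^ 2 ≠ 0 := by
    contrapose! hu
    ext <;> simp <;> nlinarith [sq_nonneg u.1, sq_nonneg u.2]
  unfold cross at h
  refine ⟨(w.1 * u.1 + w.2 * u.2) / (u.1 ^ 2 + u.2 ^ 2), Prod.ext ?_ ?_⟩ <;>
    simp only [Prod.smul_fst, Prod.smul_snd, smul_eq_mul] <;> field_simp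
  · linear_combination (-u.2) * h
  · linear_combination u.1 * h

theorem exists_lineMap_eq_of_orient_eq_zero {a b c : ℝ × ℝ} (hab : a ≠ b)
    (h : orient a b c = 0) : ∃ γ : ℝ, lineMap a b γ = c := by
  obtain ⟨γ, hγ⟩ := exists_eq_smul_of_cross_eq_zero (sub_ne_zero.2 hab.symm) h
  exact ⟨γ, by rw [lineMap_apply_module', ← hγ, sub_add_cancel]⟩

theorem orient_eq_of_lineMap_eq {a b c d : ℝ × ℝ} {t s : ℝ}
    (h : lineMap a b t = lineMap c d s) :
    orient c d a = -t * cross (d - c) (b - a) ∧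
      orient c d b = (1 - t) * cross (d - c) (b - a) ∧
      orient a b c = s * cross (d - c) (b - a) ∧
      orient a b d = (s - 1) * cross (d - c) (b - a) := by
  simp only [lineMap_apply_module', Prod.ext_iff, Prod.fst_add, Prod.snd_add, Prod.smul_fst,
    Prod.smul_snd, Prod.fst_sub, Prod.snd_sub, smul_eq_mul] at h
  obtain ⟨h1, h2⟩ := h
  simp only [orient, cross, Prod.fst_sub, Prod.snd_sub]
  refine ⟨?_, ?_, ?_, ?_⟩
  · linear_combination (d.1 - c.1) * h2 - (d.2 - c.2) * h1
  · linear_combination (d.1 - c.1) * h2 - (d.2 - c.2) * h1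
  · linear_combination (b.2 - a.2) * h1 - (b.1 - a.1) * h2
  · linear_combination (b.2 - a.2) * h1 - (b.1 - a.1) * h2

theorem disjoint_openSegment_of_endpoints_not_mem {α β γ δ : ℝ}
    (hα : α ∉ openSegment ℝ γ δ) (hβ : β ∉ openSegment ℝ γ δ) (hγ : γ ∉ openSegment ℝ α β)
    (hγα : γ ≠ α) (hγβ : γ ≠ β) : Disjoint (openSegment ℝ α β) (openSegment ℝ γ δ) := by
  rw [Set.disjoint_left]
  intro p hp hq
  rcases eq_or_ne α β with rfl | hαβ
  · rw [openSegment_same] at hp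
    exact hα (hp ▸ hq)
  rcases eq_or_ne γ δ with rfl | hγδ
  · rw [openSegment_same] at hq
    exact hγ (hq ▸ hp)
  rw [openSegment_eq_Ioo' hαβ] at hp hγ
  rw [openSegment_eq_Ioo' hγδ] at hq hα hβ
  simp only [Set.mem_Ioo, not_and_or, not_lt] at *
  rcases le_total α β with h | h <;> rcases le_total γ δ with h' | h' <;>
    simp only [min_eq_left, min_eq_right, max_eq_left, max_eq_right, h, h'] at * <;>
    grind

theorem Function.Injective.mem_openSegment_map_iff {𝕜 E F : Type*} [Ring 𝕜] [PartialOrder 𝕜]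
    [AddRightMono 𝕜] [AddCommGroup E] [Module 𝕜 E] [AddCommGroup F] [Module 𝕜 F]
    {f : E →ᵃ[𝕜] F} (hf : Function.Injective f) {x y z : E} :
    f x ∈ openSegment 𝕜 (f y) (f z) ↔ x ∈ openSegment 𝕜 y z := by
  rw [← image_openSegment, hf.mem_set_image]

/-- Two overlapping collinear segments would put an endpoint of one inside the other. -/
theorem cross_ne_zero_of_lineMap_eq {a b c d : ℝ × ℝ} (hab : a ≠ b) (hca : c ≠ a)
    (hcb : c ≠ b) (ha : a ∉ openSegment ℝ c d) (hb : b ∉ openSegment ℝ c d)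
    (hc : c ∉ openSegment ℝ a b) {t s : ℝ} (ht : t ∈ Set.Ioo 0 1) (hs : s ∈ Set.Ioo 0 1)
    (h : lineMap a b t = lineMap c d s) :
    cross (d - c) (b - a) ≠ 0 := by
  intro hW
  obtain ⟨-, -, hc0, hd0⟩ := orient_eq_of_lineMap_eq h
  rw [hW, mul_zero] at hc0 hd0
  obtain ⟨γ, rfl⟩ := exists_lineMap_eq_of_orient_eq_zero hab hc0
  obtain ⟨δ, rfl⟩ := exists_lineMap_eq_of_orient_eq_zero hab hd0
  have hF := lineMap_injective ℝ hab
  have hs' : lineMap a b t ∈ openSegment ℝ (lineMap a b γ) (lineMap a b δ) :=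
    h ▸ lineMap_mem_openSegment ℝ _ _ hs
  have h0 : (0 : ℝ) ∉ openSegment ℝ γ δ := by
    rwa [← hF.mem_openSegment_map_iff, lineMap_apply_zero]
  have h1 : (1 : ℝ) ∉ openSegment ℝ γ δ := by
    rwa [← hF.mem_openSegment_map_iff, lineMap_apply_one]
  have hγ : γ ∉ openSegment ℝ 0 1 := by
    rwa [← hF.mem_openSegment_map_iff, lineMap_apply_zero, lineMap_apply_one]
  have hγ0 : γ ≠ 0 := hF.ne_iff.1 (by rwa [lineMap_apply_zero])
  have hγ1 : γ ≠ 1 := hF.ne_iff.1 (by rwa [lineMap_apply_one])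
  rw [hF.mem_openSegment_map_iff] at hs'
  refine Set.disjoint_left.1
    (disjoint_openSegment_of_endpoints_not_mem h0 h1 hγ hγ0 hγ1) ?_ hs'
  rwa [openSegment_eq_Ioo zero_lt_one]

theorem orient_mul_orient_neg_of_openSegment_inter {a b c d : ℝ × ℝ} (hab : a ≠ b)
    (hca : c ≠ a) (hcb : c ≠ b) (ha : a ∉ openSegment ℝ c d) (hb : b ∉ openSegment ℝ c d)
    (hc : c ∉ openSegment ℝ a b) (hmeet : (openSegment ℝ a b ∩ openSegment ℝ c d).Nonempty) :
    orient c d a * orient c d b < 0 ∧ orient c d a * orient a b c < 0 := by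
  obtain ⟨p, hpab, hpcd⟩ := hmeet
  rw [openSegment_eq_image_lineMap] at hpab hpcd
  obtain ⟨t, ht, rfl⟩ := hpab
  obtain ⟨s, hs, h⟩ := hpcd
  have hW := cross_ne_zero_of_lineMap_eq hab hca hcb ha hb hc ht hs h.symm
  obtain ⟨hA, hB, hC, -⟩ := orient_eq_of_lineMap_eq h.symm
  rw [hA, hB, hC]
  constructor
  · nlinarith [mul_pos ht.1 (sub_pos.2 ht.2), sq_pos_of_ne_zero hW]
  · nlinarith [mul_pos ht.1 hs.1, sq_pos_of_ne_zero hW]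

theorem IsLegalDrawing.orient_mul_orient_neg {V : Type*} {G : SimpleGraph V} {f : V → ℝ × ℝ}
    (hf : IsLegalDrawing G f) {u v x y : V} (huv : G.Adj u v) (hxy : G.Adj x y) (hux : u ≠ x)
    (huy : u ≠ y) (hvx : v ≠ x) (hvy : v ≠ y)
    (hmeet : (edgeSeg f s(u, v) ∩ edgeSeg f s(x, y)).Nonempty) :
    orient (f x) (f y) (f u) * orient (f x) (f y) (f v) < 0 ∧
      orient (f x) (f y) (f u) * orient (f u) (f v) (f x) < 0 := by
  obtain ⟨hinj, hvert, -⟩ := hf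
  exact orient_mul_orient_neg_of_openSegment_inter (hinj.ne huv.ne) (hinj.ne hux.symm)
    (hinj.ne hvx.symm) (hvert x y u hxy hux huy) (hvert x y v hxy hvx hvy)
    (hvert u v x huv hux.symm hvx.symm) hmeet

section Spider

variable {L : Fin 3 → ℕ}

/-- The vertex at distance `t` from the center along leg `i` (the center itself if `t = 0`). -/
def legVertex (L : Fin 3 → ℕ) (i : Fin 3) (t : ℕ) : Option (Σ i : Fin 3, Fin (L i)) :=
  if h : 0 < t ∧ t ≤ L i then some ⟨i, ⟨t - 1, by omega⟩⟩ else none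

@[simp]
theorem legVertex_zero (i : Fin 3) : legVertex L i 0 = none := by
  simp [legVertex]

theorem legVertex_of_pos {i : Fin 3} {t : ℕ} (h0 : 0 < t) (hL : t ≤ L i) :
    legVertex L i t = some ⟨i, ⟨t - 1, by omega⟩⟩ := by
  rw [legVertex, dif_pos ⟨h0, hL⟩]

theorem threeLegSpider_adj_legVertex {i : Fin 3} {t : ℕ} (ht : t < L i) :
    (threeLegSpider L).Adj (legVertex L i t) (legVertex L i (t + 1)) := by
  rw [threeLegSpider, SimpleGraph.fromRel_adj, legVertex_of_pos t.succ_pos ht]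
  rcases t.eq_zero_or_pos with rfl | ht0
  · exact ⟨by simp, Or.inl (Or.inl ⟨i, ht, rfl, rfl⟩)⟩
  · rw [legVertex_of_pos ht0 ht.le]
    refine ⟨by simp; omega,
      Or.inl (Or.inr ⟨i, ⟨t - 1, by omega⟩, ⟨t, ht⟩, by simp; omega, rfl, rfl⟩)⟩

theorem spiderFoot_eq (hL : ∀ i, 2 ≤ L i) (i : Fin 3) :
    spiderFoot L hL i = s(legVertex L i (L i - 1), legVertex L i (L i)) := by
  have := hL i
  rw [legVertex_of_pos (by omega) (by omega), legVertex_of_pos (by omega) le_rfl, spiderFoot]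
  congr 3

theorem eq_and_le_of_legVertex_mem_spiderFoot (hL : ∀ i, 2 ≤ L i) {i j : Fin 3} {t : ℕ}
    (h : legVertex L i t ∈ spiderFoot L hL j) : i = j ∧ L i ≤ t + 1 := by
  unfold legVertex at h
  split at h
  · simp only [spiderFoot, Sym2.mem_iff, Option.some.injEq, Sigma.mk.injEq] at h
    rcases h with ⟨rfl, h⟩ | ⟨rfl, h⟩ <;> simp at h <;> omega
  · simp [spiderFoot] at h

theorem threeLegSpider_adj_spiderFoot (hL : ∀ i, 2 ≤ L i) (i : Fin 3) :
    (threeLegSpider L).Adj (legVertex L i (L i - 1)) (legVertex L i (L i)) := by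
  have := threeLegSpider_adj_legVertex (L := L) (i := i) (t := L i - 1) (by have := hL i; omega)
  rwa [Nat.sub_add_cancel (by have := hL i; omega)] at this

theorem legVertex_ne_of_mem_spiderFoot (hL : ∀ i, 2 ≤ L i) {i j : Fin 3} (hij : i ≠ j)
    {x : Option (Σ i : Fin 3, Fin (L i))} (hx : x ∈ spiderFoot L hL j) (t : ℕ) :
    legVertex L i t ≠ x :=
  fun h => hij (eq_and_le_of_legVertex_mem_spiderFoot hL (h ▸ hx)).1

theorem edgeSeg_legVertex_inter_spiderFoot_nonempty (hL : ∀ i, 2 ≤ L i)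
    {f : Option (Σ i : Fin 3, Fin (L i)) → ℝ × ℝ}
    (hcross : ∀ i j : Fin 3, i ≠ j →
      (edgeSeg f (spiderFoot L hL i) ∩ edgeSeg f (spiderFoot L hL j)).Nonempty)
    (hmissed : ∀ e ∈ (threeLegSpider L).edgeSet, ∀ i : Fin 3,
      (∀ i' : Fin 3, e ≠ spiderFoot L hL i') → (∀ x ∈ e, x ∉ spiderFoot L hL i) →
      edgeSeg f e ∩ edgeSeg f (spiderFoot L hL i) = ∅ → OnLeg e i)
    {i j : Fin 3} (hij : i ≠ j) {t : ℕ} (ht : t < L i) :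
    (edgeSeg f s(legVertex L i t, legVertex L i (t + 1)) ∩
      edgeSeg f (spiderFoot L hL j)).Nonempty := by
  rcases (show t + 1 < L i ∨ t + 1 = L i by omega) with hlt | hlast
  · by_contra hempty
    rw [Set.not_nonempty_iff_eq_empty] at hempty
    have hfoot : ∀ i', s(legVertex L i t, legVertex L i (t + 1)) ≠ spiderFoot L hL i' := by
      intro i' heq
      have := (eq_and_le_of_legVertex_mem_spiderFoot hL (heq ▸ Sym2.mem_mk_left _ _)).2
      omega
    have hdisj : ∀ x ∈ s(legVertex L i t, legVertex L i (t + 1)), x ∉ spiderFoot L hL j := by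
      rintro x hx hxj
      rcases Sym2.mem_iff.1 hx with rfl | rfl <;>
        exact hij (eq_and_le_of_legVertex_mem_spiderFoot hL hxj).1
    have honLeg := hmissed _ (threeLegSpider_adj_legVertex ht) j hfoot hdisj hempty
    exact hij (honLeg _ (Sym2.mem_mk_right _ _) i _ (legVertex_of_pos t.succ_pos ht))
  · have h := hcross i j hij
    rwa [spiderFoot_eq hL i, ← hlast, Nat.add_sub_cancel] at h

/-- The orientation of `f x` with respect to the foot of leg `j`, directed away from the
center. -/
def footOrient (f : Option (Σ i : Fin 3, Fin (L i)) → ℝ × ℝ) (j : Fin 3)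
    (x : Option (Σ i : Fin 3, Fin (L i))) : ℝ :=
  orient (f (legVertex L j (L j - 1))) (f (legVertex L j (L j))) (f x)

variable {f : Option (Σ i : Fin 3, Fin (L i)) → ℝ × ℝ}

theorem footOrient_mul_footOrient_succ_neg (hL : ∀ i, 2 ≤ L i)
    (hf : IsLegalDrawing (threeLegSpider L) f) {i j : Fin 3} (hij : i ≠ j) {t : ℕ} (ht : t < L i)
    (hmeet : (edgeSeg f s(legVertex L i t, legVertex L i (t + 1)) ∩
      edgeSeg f (spiderFoot L hL j)).Nonempty) :
    footOrient f j (legVertex L i t) * footOrient f j (legVertex L i (t + 1)) < 0 := by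
  have hA := legVertex_ne_of_mem_spiderFoot hL hij (spiderFoot_eq hL j ▸ Sym2.mem_mk_left _ _)
  have hB := legVertex_ne_of_mem_spiderFoot hL hij (spiderFoot_eq hL j ▸ Sym2.mem_mk_right _ _)
  rw [spiderFoot_eq hL j] at hmeet
  exact (hf.orient_mul_orient_neg (threeLegSpider_adj_legVertex ht)
    (threeLegSpider_adj_spiderFoot hL j) (hA t) (hB t) (hA _) (hB _) hmeet).1

theorem footOrient_mul_footOrient_neg (hL : ∀ i, 2 ≤ L i)
    (hf : IsLegalDrawing (threeLegSpider L) f) {i j : Fin 3} (hij : i ≠ j)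
    (hmeet : (edgeSeg f (spiderFoot L hL i) ∩ edgeSeg f (spiderFoot L hL j)).Nonempty) :
    footOrient f j (legVertex L i (L i - 1)) * footOrient f i (legVertex L j (L j - 1)) < 0 := by
  have hA := legVertex_ne_of_mem_spiderFoot hL hij (spiderFoot_eq hL j ▸ Sym2.mem_mk_left _ _)
  have hB := legVertex_ne_of_mem_spiderFoot hL hij (spiderFoot_eq hL j ▸ Sym2.mem_mk_right _ _)
  rw [spiderFoot_eq hL i, spiderFoot_eq hL j] at hmeet
  exact (hf.orient_mul_orient_neg (threeLegSpider_adj_spiderFoot hL i)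
    (threeLegSpider_adj_spiderFoot hL j) (hA _) (hB _) (hA _) (hB _) hmeet).2

end Spider

theorem pos_mul_of_forall_pos_mul_succ {z : ℕ → ℝ} {n : ℕ} (hz : ∀ t < n, 0 < z t * z (t + 1))
    (hn : 0 < n) : 0 < z 0 * z n := by
  induction n with
  | zero => omega
  | succ n ih =>
    rcases n.eq_zero_or_pos with rfl | hn
    · exact hz 0 one_pos
    have h := mul_pos (ih (fun t ht => hz t (by omega)) hn) (hz n n.lt_succ_self)
    exact pos_of_mul_pos_right (a := z n ^ 2) (by convert h using 1; ring) (sq_nonneg _)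

theorem false_of_sign_cycle (C : Fin 3 → ℝ) (D : Fin 3 → Fin 3 → ℝ)
    (hpos : ∀ i j k, j ≠ i → k ≠ i → j ≠ k → 0 < C j * C k * (D j i * D k i))
    (hneg : ∀ i j, i ≠ j → D j i * D i j < 0) : False := by
  have hP := mul_pos (mul_pos (hpos 0 1 2 (by decide) (by decide) (by decide))
    (hpos 1 0 2 (by decide) (by decide) (by decide)))
    (hpos 2 0 1 (by decide) (by decide) (by decide))
  have hN := mul_neg_of_neg_of_pos (hneg 0 1 (by decide))
    (mul_pos_of_neg_of_neg (hneg 0 2 (by decide)) (hneg 1 2 (by decide)))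
  have hprod : C 1 * C 2 * (D 1 0 * D 2 0) * (C 0 * C 2 * (D 0 1 * D 2 1)) *
      (C 0 * C 1 * (D 0 2 * D 1 2)) = (C 0 * C 1 * C 2) ^ 2 *
      (D 1 0 * D 0 1 * (D 2 0 * D 0 2 * (D 2 1 * D 1 2))) := by ring
  rw [hprod] at hP
  exact hP.not_ge (mul_nonpos_of_nonneg_of_nonpos (sq_nonneg _) hN.le)

/-- Let `S` be a spider with exactly three legs, each of length at least `2`,
with feet `e₁, e₂, e₃`. In any legal rectilinear drawing of `S` in which the (open) segments
of the three feet pairwise cross, there exist an edge `e` of `S` other than the three feet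
and an index `i` such that `e` and the foot `eᵢ` share no endpoint, their open segments do
not intersect, and `e` lies on a different leg than `eᵢ`. -/
theorem spider_three_feet_missed_crossing (L : Fin 3 → ℕ) (hL : ∀ i, 2 ≤ L i)
    (f : Option (Σ i : Fin 3, Fin (L i)) → ℝ × ℝ)
    (hf : IsLegalDrawing (threeLegSpider L) f)
    (hcross : ∀ i j : Fin 3, i ≠ j →
      (edgeSeg f (spiderFoot L hL i) ∩ edgeSeg f (spiderFoot L hL j)).Nonempty) :
    ∃ e ∈ (threeLegSpider L).edgeSet, ∃ i : Fin 3,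
      (∀ i' : Fin 3, e ≠ spiderFoot L hL i') ∧
      (∀ x, x ∈ e → x ∉ spiderFoot L hL i) ∧
      edgeSeg f e ∩ edgeSeg f (spiderFoot L hL i) = ∅ ∧
      ¬ OnLeg e i := by
  by_contra hmissed
  push Not at hmissed
  have hleg : ∀ i j, i ≠ j → ∀ t < L i,
      footOrient f j (legVertex L i t) * footOrient f j (legVertex L i (t + 1)) < 0 :=
    fun i j hij t ht => footOrient_mul_footOrient_succ_neg hL hf hij ht
      (edgeSeg_legVertex_inter_spiderFoot_nonempty hL hcross hmissed hij ht)
  refine false_of_sign_cycle (fun j => footOrient f j none)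
    (fun j i => footOrient f j (legVertex L i (L i - 1))) ?_
    (fun i j hij => footOrient_mul_footOrient_neg hL hf hij (hcross i j hij))
  intro i j k hji hki _
  have hchain := pos_mul_of_forall_pos_mul_succ
    (z := fun t => footOrient f j (legVertex L i t) * footOrient f k (legVertex L i t))
    (n := L i - 1) (fun t ht => by
      rw [mul_mul_mul_comm]
      exact mul_pos_of_neg_of_neg (hleg i j hji.symm t (by omega))
        (hleg i k hki.symm t (by omega)))
    (by have := hL i; omega)
  simpa only [legVertex_zero, mul_mul_mul_comm] using hchain
end

section
/- Let k ≥ 3 and let ℓ_1 ≥ ℓ_2 ≥ … ≥ ℓ_k ≥ 1 be integers, and for each j ≥ 1 let a_j := #{i ∈ [k] : ℓ_i ≥ j} (so a_1 = k and a_j = 0 for j > ℓ_1). Then Σ_{i=3}^{k} (ℓ_i − 1)·⌊(i−1)/2⌋ = Σ_{j=2}^{ℓ_1} ( C(⌊a_j/2⌋, 2) + C(⌈a_j/2⌉, 2) ). -/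
open Finset

lemma sum_floor_half_aux (a : ℕ) :
    ∑ i ∈ Finset.Icc 3 a, (i - 1) / 2 =
      Nat.choose (a / 2) 2 + Nat.choose ((a + 1) / 2) 2 := by
  induction a with
  | zero => decide
  | succ a ih =>
    rcases Nat.lt_or_ge a 2 with h | h
    · interval_cases a <;> decide
    · rw [Finset.sum_Icc_succ_top (by omega : 3 ≤ a + 1), ih]
      have h1 : (a + 1 + 1) / 2 = a / 2 + 1 := by omega
      have h2 : (a + 1 - 1) / 2 = a / 2 := by omega
      rw [h1, h2, Nat.choose_succ_succ (a / 2) 1, Nat.choose_one_right]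
      ring

lemma filter_eq_Icc_aux (k : ℕ) (l : ℕ → ℕ)
    (hmono : ∀ i j, 1 ≤ i → i ≤ j → j ≤ k → l j ≤ l i) (j : ℕ) :
    (Finset.Icc 1 k).filter (fun i => j ≤ l i) =
      Finset.Icc 1 (((Finset.Icc 1 k).filter (fun i => j ≤ l i)).card) := by
  set S := (Finset.Icc 1 k).filter (fun i => j ≤ l i) with hS
  have hsub : S ⊆ Finset.Icc 1 k := Finset.filter_subset _ _
  have hcard : S.card ≤ k := by
    have := Finset.card_le_card hsub
    simpa [Nat.card_Icc] using this
  apply (Finset.eq_of_subset_of_card_le ?_ ?_).symm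
  · intro i hi
    simp only [Finset.mem_Icc] at hi
    by_contra hcon
    have hik : i ∈ Finset.Icc 1 k := Finset.mem_Icc.mpr ⟨hi.1, le_trans hi.2 hcard⟩
    have hli : l i < j := by
      by_contra h
      exact hcon (Finset.mem_filter.mpr ⟨hik, by omega⟩)
    have hsub2 : S ⊆ Finset.Icc 1 (i - 1) := by
      intro x hx
      rw [hS, Finset.mem_filter, Finset.mem_Icc] at hx
      rw [Finset.mem_Icc]
      refine ⟨hx.1.1, ?_⟩
      by_contra hx2
      have hix : i ≤ x := by omega
      exact absurd (le_trans hx.2 (hmono i x (by omega) hix hx.1.2)) (by omega)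
    have := Finset.card_le_card hsub2
    simp [Nat.card_Icc] at this
    omega
  · simp [Nat.card_Icc]

/-- Let `k ≥ 3` and `ℓ_1 ≥ ℓ_2 ≥ … ≥ ℓ_k ≥ 1` be integers (given by a function
`l : ℕ → ℕ`, antitone on `[1, k]`), and for `j ≥ 1` let `a_j = #{i ∈ [k] : ℓ_i ≥ j}`. Then
`∑_{i=3}^{k} (ℓ_i − 1)·⌊(i−1)/2⌋ = ∑_{j=2}^{ℓ_1} ( C(⌊a_j/2⌋, 2) + C(⌈a_j/2⌉, 2) )`.
(Here `⌈a/2⌉ = (a+1)/2` in ℕ.) -/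
theorem spider_count_identity (k : ℕ) (hk : 3 ≤ k) (l : ℕ → ℕ)
    (hmono : ∀ i j, 1 ≤ i → i ≤ j → j ≤ k → l j ≤ l i)
    (hpos : ∀ i, 1 ≤ i → i ≤ k → 1 ≤ l i) :
    ∑ i ∈ Finset.Icc 3 k, (l i - 1) * ((i - 1) / 2) =
      ∑ j ∈ Finset.Icc 2 (l 1),
        (Nat.choose ((((Finset.Icc 1 k).filter (fun i => j ≤ l i)).card) / 2) 2 +
         Nat.choose (((((Finset.Icc 1 k).filter (fun i => j ≤ l i)).card) + 1) / 2) 2) := by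
  have hstep : ∀ i ∈ Finset.Icc 3 k, (l i - 1) * ((i - 1) / 2)
      = ∑ j ∈ Finset.Icc 2 (l 1), if j ≤ l i then (i - 1) / 2 else 0 := by
    intro i hi
    rw [Finset.mem_Icc] at hi
    have hfilter : (Finset.Icc 2 (l 1)).filter (fun j => j ≤ l i) = Finset.Icc 2 (l i) := by
      ext j
      simp only [Finset.mem_filter, Finset.mem_Icc]
      constructor
      · rintro ⟨⟨h2, _⟩, h3⟩; exact ⟨h2, h3⟩
      · rintro ⟨h2, h3⟩
        exact ⟨⟨h2, le_trans h3 (hmono 1 i le_rfl (by omega) hi.2)⟩, h3⟩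
    rw [← Finset.sum_filter, hfilter, Finset.sum_const, Nat.card_Icc, smul_eq_mul]
    have h12 : l i + 1 - 2 = l i - 1 := by omega
    rw [h12]
  rw [Finset.sum_congr rfl hstep, Finset.sum_comm]
  apply Finset.sum_congr rfl
  intro j _
  have key := filter_eq_Icc_aux k l hmono j
  set a := ((Finset.Icc 1 k).filter (fun i => j ≤ l i)).card with ha
  have hak : a ≤ k := by
    have := Finset.card_le_card (Finset.filter_subset (fun i => j ≤ l i) (Finset.Icc 1 k))
    simpa [Nat.card_Icc] using this
  have h2 : (Finset.Icc 3 k).filter (fun i => j ≤ l i) = Finset.Icc 3 a := by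
    ext i
    simp only [Finset.mem_filter, Finset.mem_Icc]
    constructor
    · rintro ⟨⟨h3, hk'⟩, hl⟩
      have hmem : i ∈ (Finset.Icc 1 k).filter (fun i => j ≤ l i) :=
        Finset.mem_filter.mpr ⟨Finset.mem_Icc.mpr ⟨by omega, hk'⟩, hl⟩
      rw [key, Finset.mem_Icc] at hmem
      exact ⟨h3, hmem.2⟩
    · rintro ⟨h3, hia⟩
      have hmem : i ∈ Finset.Icc 1 a := Finset.mem_Icc.mpr ⟨by omega, hia⟩
      rw [← key, Finset.mem_filter, Finset.mem_Icc] at hmem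
      exact ⟨⟨h3, hmem.1.2⟩, hmem.2⟩
  rw [← Finset.sum_filter, h2, sum_floor_half_aux a]
end

section
/- Let T be a tree on n vertices of diameter exactly 4 and of type (c_1, …, c_k) with c_1 ≥ … ≥ c_k, and let d = Σ_{i ≥ 1} i·c_{2i+1} + Σ_{i ≥ 1} i·c_{2i+2}. Then in every legal rectilinear drawing of T, the number of crossing pairs of edges is at most C(n−1, 2) − Σ_{u ∈ V(T)} C(d(u), 2) − d; equivalently, every legal rectilinear drawing of T has at least d nontrivial missed crossings (unordered pairs of nonadjacent edges whose segments do not cross). -/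
open Finset

/-- The number of crossing pairs of edges in the drawing `f` of `G`: the number of unordered
pairs (two-element sets) `{e₁, e₂}` of edges sharing no endpoint whose drawn open segments
intersect. -/
noncomputable def crossCount {V : Type*} (G : SimpleGraph V) (f : V → ℝ × ℝ) : ℕ :=
  Set.ncard {s : Set (Sym2 V) | ∃ e₁ e₂ : Sym2 V,
    e₁ ∈ G.edgeSet ∧ e₂ ∈ G.edgeSet ∧ (∀ x, x ∈ e₁ → x ∉ e₂) ∧
    (edgeSeg f e₁ ∩ edgeSeg f e₂).Nonempty ∧ s = {e₁, e₂}}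

/-!
Pair each edge `u x — w` from a child of the root `v` to a grandchild with each root edge
`v — u a`, `a ≠ x`: these are vertex-disjoint, and we count the pairs that do not cross.
If `u x — w` crosses both `v — u a` and `v — u b`, then `u a` and `u b` lie strictly on the same
side of the line through `v` and `u x` (legality excludes the collinear configurations).
Sorting the children by the angle of their lines through `v`, a discrete intermediate value
argument finds, among `m` children, one `u x` whose line has at least `⌊(m - 1) / 2⌋` of the
others on each closed side; so each of the `c x` edges below `u x` misses that many root edges.
Removing `u x` and repeating yields at least `∑ ⌊(m - 1) / 2⌋ c x_m` missed pairs, where `x_m` is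
removed from a set of size `m`, and by the rearrangement inequality this is at least
`∑ ⌊(i - 1) / 2⌋ c i = d`. Of the `C(n - 1, 2)` pairs of edges, `∑ C(d(w), 2)` share a vertex.
-/

namespace TreeDrawing

open SimpleGraph

def Crosses {V : Type*} (f : V → ℝ × ℝ) (e₁ e₂ : Sym2 V) : Prop :=
  (edgeSeg f e₁ ∩ edgeSeg f e₂).Nonempty

noncomputable instance {V : Type*} (f : V → ℝ × ℝ) (e₁ e₂ : Sym2 V) :
    Decidable (Crosses f e₁ e₂) :=
  Classical.dec _

section EdgePairs

variable {V : Type*} [Fintype V] [DecidableEq V] (G : SimpleGraph V) [DecidableRel G.Adj]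

def IsMissedCrossing (f : V → ℝ × ℝ) (t : Finset (Sym2 V)) : Prop :=
  ∃ e₁ e₂, t = {e₁, e₂} ∧ e₁ ∈ G.edgeSet ∧ e₂ ∈ G.edgeSet ∧ (∀ z ∈ e₁, z ∉ e₂) ∧
    ¬Crosses f e₁ e₂

def adjacentEdgePairs : Finset (Finset (Sym2 V)) :=
  univ.biUnion fun w => (G.incidenceFinset w).powersetCard 2

lemma card_adjacentEdgePairs : #(adjacentEdgePairs G) = ∑ w, (G.degree w).choose 2 := by
  rw [adjacentEdgePairs, card_biUnion]
  · simp [card_powersetCard, card_incidenceFinset_eq_degree]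
  -- two distinct edges share at most one vertex
  intro w _ w' _ hww
  refine Finset.disjoint_left.2 fun t ht ht' => ?_
  rw [mem_powersetCard] at ht ht'
  obtain ⟨e₁, e₂, hne, rfl⟩ := card_eq_two.1 ht.2
  have hmem : ∀ {u e}, e ∈ G.incidenceFinset u → u ∈ e := fun he =>
    ((G.mem_incidenceFinset _ _).1 he).2
  exact hne (Sym2.eq_of_ne_mem hww (hmem (ht.1 (by simp))) (hmem (ht'.1 (by simp)))
    (hmem (ht.1 (by simp))) (hmem (ht'.1 (by simp))))

lemma adjacentEdgePairs_subset : adjacentEdgePairs G ⊆ G.edgeFinset.powersetCard 2 :=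
  biUnion_subset.2 fun _ _ => powersetCard_mono fun _ he =>
    mem_edgeFinset.2 ((G.mem_incidenceFinset _ _).1 he).1

lemma pair_mem_sdiff_adjacentEdgePairs {e₁ e₂ : Sym2 V} (he₁ : e₁ ∈ G.edgeSet)
    (he₂ : e₂ ∈ G.edgeSet) (hdisj : ∀ z ∈ e₁, z ∉ e₂) :
    {e₁, e₂} ∈ G.edgeFinset.powersetCard 2 \ adjacentEdgePairs G := by
  have hne : e₁ ≠ e₂ := by
    rintro rfl; exact hdisj _ (Sym2.out_fst_mem e₁) (Sym2.out_fst_mem e₁)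
  refine mem_sdiff.2 ⟨mem_powersetCard.2 ⟨?_, card_pair hne⟩, ?_⟩
  · simp [insert_subset_iff, he₁, he₂]
  · simp only [adjacentEdgePairs, mem_biUnion, mem_univ, true_and, mem_powersetCard,
      not_exists, not_and, insert_subset_iff, singleton_subset_iff, G.mem_incidenceFinset]
    exact fun w ⟨⟨_, h₁⟩, _, h₂⟩ _ => hdisj w h₁ h₂

lemma crossCount_add_card_le (f : V → ℝ × ℝ) (M : Finset (Finset (Sym2 V)))
    (hM : ∀ t ∈ M, IsMissedCrossing G f t) :
    crossCount G f + #M + ∑ w, (G.degree w).choose 2 ≤ (#G.edgeFinset).choose 2 := by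
  set N := G.edgeFinset.powersetCard 2 \ adjacentEdgePairs G
  have hMN : M ⊆ N := fun t ht => by
    obtain ⟨e₁, e₂, rfl, he₁, he₂, hdisj, -⟩ := hM t ht
    exact pair_mem_sdiff_adjacentEdgePairs G he₁ he₂ hdisj
  have hcross : crossCount G f ≤ #(N \ M) := by
    refine (Set.ncard_le_ncard (t := (fun t : Finset (Sym2 V) => (t : Set (Sym2 V))) '' ↑(N \ M))
      ?_ (Set.toFinite _)).trans ((Set.ncard_image_le (finite_toSet _)).trans
        (Set.ncard_coe_finset _).le)
    rintro _ ⟨e₁, e₂, he₁, he₂, hdisj, hcr, rfl⟩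
    refine ⟨{e₁, e₂}, mem_sdiff.2 ⟨pair_mem_sdiff_adjacentEdgePairs G he₁ he₂ hdisj,
      fun hmem => ?_⟩, coe_pair⟩
    obtain ⟨e₁', e₂', heq, -, -, -, hmiss⟩ := hM _ hmem
    rw [← coe_inj, coe_pair, coe_pair, Set.pair_eq_pair_iff] at heq
    rcases heq with ⟨rfl, rfl⟩ | ⟨rfl, rfl⟩
    · exact hmiss hcr
    · obtain ⟨z, hz₁, hz₂⟩ := hcr
      exact hmiss ⟨z, hz₂, hz₁⟩
  have hN : #N + ∑ w, (G.degree w).choose 2 = (#G.edgeFinset).choose 2 := by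
    rw [← card_adjacentEdgePairs G, card_sdiff_add_card_eq_card (adjacentEdgePairs_subset G),
      card_powersetCard]
  have := card_sdiff_add_card_eq_card hMN
  omega

end EdgePairs

section Geometry

def cross (p q : ℝ × ℝ) : ℝ := p.1 * q.2 - p.2 * q.1

lemma cross_swap (p q : ℝ × ℝ) : cross q p = -cross p q := by
  simp only [cross]; ring

lemma cross_smul_smul (s t : ℝ) (p q : ℝ × ℝ) : cross (s • p) (t • q) = s * t * cross p q := by
  simp only [cross, Prod.smul_fst, Prod.smul_snd, smul_eq_mul]; ring

lemma exists_eq_smul_of_cross_eq_zero {p q : ℝ × ℝ} (h : cross p q = 0) (hq : q ≠ 0) :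
    ∃ t : ℝ, p = t • q := by
  simp only [cross] at h
  rcases eq_or_ne q.1 0 with h1 | h1
  · have h2 : q.2 ≠ 0 := fun h2 => hq (Prod.ext h1 h2)
    refine ⟨p.2 / q.2, Prod.ext ?_ ?_⟩
    · have : p.1 = 0 := by simpa [h1, h2] using h
      simp [this, h1]
    · simp [h2]
  · refine ⟨p.1 / q.1, Prod.ext ?_ ?_⟩
    · simp [h1]
    · simp only [Prod.smul_snd, smul_eq_mul]
      field_simp
      linarith

lemma exists_cross_eq_of_mem_openSegment {v a x w s : ℝ × ℝ} (hva : s ∈ openSegment ℝ v a)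
    (hxw : s ∈ openSegment ℝ x w) :
    ∃ θ η : ℝ, 0 < θ ∧ 0 < η ∧ cross (x - v) (w - x) = θ * cross (a - v) (w - x) ∧
      cross (a - v) (x - v) = -(η * cross (a - v) (w - x)) := by
  rw [openSegment_eq_image'] at hva hxw
  obtain ⟨θ, ⟨hθ, -⟩, rfl⟩ := hva
  obtain ⟨η, ⟨hη, -⟩, hs⟩ := hxw
  have hx : x - v = θ • (a - v) - η • (w - x) := by
    linear_combination (norm := module) hs
  refine ⟨θ, η, hθ, hη, ?_, ?_⟩ <;>
  · rw [hx]
    simp only [cross, Prod.fst_sub, Prod.snd_sub, Prod.smul_fst, Prod.smul_snd, smul_eq_mul]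
    ring

lemma disjoint_openSegment_zero_one {α β : ℝ} (hα : α ≠ 0) (hβ : β ≠ 0)
    (hα1 : α ∉ openSegment ℝ 0 1) (hβ1 : β ∉ openSegment ℝ 0 1) (h0 : 0 ∉ openSegment ℝ α β) :
    Disjoint (openSegment ℝ α β) (openSegment ℝ 0 1) := by
  wlog hle : α ≤ β generalizing α β
  · rw [openSegment_symm]
    exact this hβ hα hβ1 hα1 (by rwa [openSegment_symm]) (le_of_not_ge hle)
  rw [openSegment_eq_Ioo zero_lt_one] at hα1 hβ1 ⊢
  rcases hle.eq_or_lt with rfl | hlt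
  · simpa [openSegment_same] using hα1
  rw [openSegment_eq_Ioo hlt] at h0 ⊢
  simp only [Set.mem_Ioo, not_and_or, not_lt] at hα1 hβ1 h0
  rw [Set.Ioo_disjoint_Ioo]
  simp only [min_le_iff, le_max_iff]
  grind

lemma disjoint_openSegment_of_collinear {v a x w : ℝ × ℝ} (hwx : w ≠ x)
    (hv : cross (v - x) (w - x) = 0) (ha : cross (a - x) (w - x) = 0) (hxv : x ≠ v)
    (hxa : x ≠ a) (hvxw : v ∉ openSegment ℝ x w) (haxw : a ∉ openSegment ℝ x w)
    (hxva : x ∉ openSegment ℝ v a) :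
    Disjoint (openSegment ℝ v a) (openSegment ℝ x w) := by
  have hd : w - x ≠ 0 := sub_ne_zero.2 hwx
  obtain ⟨α, hα⟩ := exists_eq_smul_of_cross_eq_zero hv hd
  obtain ⟨β, hβ⟩ := exists_eq_smul_of_cross_eq_zero ha hd
  set L := AffineMap.lineMap (k := ℝ) x w
  have hL : Function.Injective L := AffineMap.lineMap_injective ℝ hwx.symm
  have hvL : v = L α := by rw [AffineMap.lineMap_apply_module', ← hα]; abel
  have haL : a = L β := by rw [AffineMap.lineMap_apply_module', ← hβ]; abel
  have hva : openSegment ℝ v a = L '' openSegment ℝ α β := by rw [image_openSegment, hvL, haL]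
  have hxw : openSegment ℝ x w = L '' openSegment ℝ 0 1 := by
    rw [image_openSegment, AffineMap.lineMap_apply_zero, AffineMap.lineMap_apply_one]
  have hx : x = L 0 := (AffineMap.lineMap_apply_zero _ _).symm
  rw [hxw, hvL, hL.mem_set_image] at hvxw
  rw [hxw, haL, hL.mem_set_image] at haxw
  rw [hva, hx, hL.mem_set_image] at hxva
  rw [hva, hxw, Set.disjoint_image_iff hL]
  refine disjoint_openSegment_zero_one ?_ ?_ hvxw haxw hxva
  · rintro rfl
    exact hxv (sub_eq_zero.1 (by simpa using hα)).symm
  · rintro rfl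
    exact hxa (sub_eq_zero.1 (by simpa using hβ)).symm

lemma not_crosses_both_of_cross_mul_cross_nonpos {v a b x w : ℝ × ℝ}
    (hside : cross (a - v) (x - v) * cross (b - v) (x - v) ≤ 0)
    (hwx : w ≠ x) (hxv : x ≠ v) (hxa : x ≠ a)
    (hvxw : v ∉ openSegment ℝ x w) (haxw : a ∉ openSegment ℝ x w)
    (hxva : x ∉ openSegment ℝ v a) :
    ¬((openSegment ℝ v a ∩ openSegment ℝ x w).Nonempty ∧
      (openSegment ℝ v b ∩ openSegment ℝ x w).Nonempty) := by
  rintro ⟨⟨s, hsa, hsx⟩, ⟨t, htb, htx⟩⟩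
  obtain ⟨θ, η, hθ, hη, hxa', hax⟩ := exists_cross_eq_of_mem_openSegment hsa hsx
  obtain ⟨θ', η', hθ', hη', hxb', hbx⟩ := exists_cross_eq_of_mem_openSegment htb htx
  by_cases hdeg : cross (x - v) (w - x) = 0
  · have hP : cross (a - v) (w - x) = 0 := by
      simpa [hθ.ne'] using hxa'.symm.trans hdeg
    refine Set.disjoint_left.1
      (disjoint_openSegment_of_collinear hwx ?_ ?_ hxv hxa hvxw haxw hxva) hsa hsx
    · simp only [cross, Prod.fst_sub, Prod.snd_sub] at hdeg ⊢; linarith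
    · simp only [cross, Prod.fst_sub, Prod.snd_sub] at hdeg hP ⊢; linarith
  · -- both `cross (a - v) (x - v)` and `cross (b - v) (x - v)` have the sign of
    -- `-cross (x - v) (w - x)`
    have hPQ : 0 < cross (a - v) (w - x) * cross (b - v) (w - x) := by
      have h : θ * θ' * (cross (a - v) (w - x) * cross (b - v) (w - x)) =
          cross (x - v) (w - x) ^ 2 := by rw [sq]; nth_rewrite 1 [hxa']; rw [hxb']; ring
      have hsq : 0 < cross (x - v) (w - x) ^ 2 := by positivity
      exact pos_of_mul_pos_right (h ▸ hsq) (by positivity)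
    rw [hax, hbx] at hside
    nlinarith [mul_pos hη hη']

end Geometry

section Halving

lemma exists_sign_change (g : ℕ → ℤ) {m : ℕ} (hm : 0 < m) (h : g 0 * g m ≤ 0) :
    ∃ j < m, g j * g (j + 1) ≤ 0 := by
  induction m with
  | zero => exact absurd hm (lt_irrefl 0)
  | succ m ih =>
    by_cases hlast : g m * g (m + 1) ≤ 0
    · exact ⟨m, m.lt_succ_self, hlast⟩
    rcases Nat.eq_zero_or_pos m with rfl | hm'
    · exact absurd h hlast
    have h0m : g 0 * g m ≤ 0 := by
      by_contra hc
      nlinarith [mul_pos (lt_of_not_ge hc) (lt_of_not_ge hlast),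
        mul_nonpos_of_nonpos_of_nonneg h (sq_nonneg (g m))]
    obtain ⟨j, hj, hj'⟩ := ih hm' h0m
    exact ⟨j, hj.trans m.lt_succ_self, hj'⟩

lemma exists_balanced_split (l : List ℤ) (hl : ∀ e ∈ l, e = 1 ∨ e = -1) (hne : l ≠ []) :
    ∃ j < l.length, |(l.take j).sum - (l.drop (j + 1)).sum| ≤ 1 := by
  -- `F 0 = -F l.length`, so `F` changes sign at some `j`; there `F j + F (j + 1)` is twice the
  -- wanted difference and `F (j + 1) - F j = 2 * l[j]`
  set F : ℕ → ℤ := fun j => (l.take j).sum - (l.drop j).sum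
  obtain ⟨j, hj, hFj⟩ := exists_sign_change F (List.length_pos_iff.2 hne)
    (by simp only [F, List.take_zero, List.drop_zero, List.take_length, List.drop_length,
          List.sum_nil]
        nlinarith [sq_nonneg l.sum])
  refine ⟨j, hj, ?_⟩
  have hdrop : l.drop j = l[j] :: l.drop (j + 1) := List.drop_eq_getElem_cons hj
  have htake : l.take (j + 1) = l.take j ++ [l[j]] := List.take_succ_eq_append_getElem hj
  simp only [F, hdrop, htake, List.sum_cons, List.sum_append, List.sum_nil] at hFj
  have he : l[j] ^ 2 = 1 := by rcases hl _ (List.getElem_mem hj) with h | h <;> simp [h]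
  exact (sq_le_one_iff_abs_le_one _).1 (by nlinarith)

lemma exists_balanced_pivot {α : Type*} [DecidableEq α] (R : α → α → Prop) [DecidableRel R]
    [Std.Total R] [IsTrans α R] (ε : α → ℤ) (S : Finset α) (hε : ∀ a ∈ S, ε a = 1 ∨ ε a = -1)
    (hS : S.Nonempty) :
    ∃ x ∈ S, ∃ B A : List α, (B ++ A).Nodup ∧ (B ++ A).toFinset = S.erase x ∧
      (∀ a ∈ B, R a x) ∧ (∀ a ∈ A, R x a) ∧ |(B.map ε).sum - (A.map ε).sum| ≤ 1 := by
  set L := S.toList.insertionSort R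
  have hperm : L.Perm S.toList := List.perm_insertionSort R _
  have hsorted : L.Pairwise R := List.pairwise_insertionSort R _
  have hlen : L.length = #S := hperm.length_eq.trans S.length_toList
  obtain ⟨j, hj, hbal⟩ := exists_balanced_split (L.map ε)
    (by simpa using fun a ha => hε a (mem_toList.1 (hperm.subset ha)))
    (by simpa [← List.length_pos_iff, hlen] using hS.card_pos)
  rw [List.length_map] at hj
  rw [← List.map_take, ← List.map_drop] at hbal
  set x := L[j]
  set B := L.take j
  set A := L.drop (j + 1)
  have hL : L = B ++ x :: A := by
    rw [← List.drop_eq_getElem_cons hj, List.take_append_drop]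
  have hmemS : ∀ a, a ∈ S ↔ a ∈ B ++ x :: A := fun a => by
    rw [← mem_toList, ← hperm.mem_iff, ← hL]
  have hnd : L.Nodup := hperm.nodup_iff.2 S.nodup_toList
  rw [hL] at hsorted hnd
  obtain ⟨hxBA, hnd⟩ := List.nodup_cons.1 (List.nodup_middle.1 hnd)
  refine ⟨x, (hmemS x).2 (by simp), B, A, hnd, ?_,
    fun a ha => (List.pairwise_append.1 hsorted).2.2 a ha x List.mem_cons_self,
    (List.pairwise_cons.1 (List.pairwise_append.1 hsorted).2.1).1, hbal⟩
  ext a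
  simp only [mem_erase, hmemS, List.mem_toFinset, List.mem_append, List.mem_cons]
  constructor
  · rintro (ha | ha) <;> refine ⟨?_, by simp [ha]⟩ <;> rintro rfl <;> simp_all
  · rintro ⟨hax, ha | rfl | ha⟩ <;> simp_all

lemma half_le_card_filter_of_signs {ι : Type*} (T : Finset ι) (g : ι → ℝ) (φ : ι → ℤ)
    (hφ : ∀ a ∈ T, φ a = 1 ∨ φ a = -1) (hsum : |∑ a ∈ T, φ a| ≤ 1)
    (hside : ∀ a ∈ T, 0 ≤ (φ a : ℝ) * g a) :
    #T / 2 ≤ #{a ∈ T | 0 ≤ g a} ∧ #T / 2 ≤ #{a ∈ T | g a ≤ 0} := by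
  have hneg : {a ∈ T | φ a = -1} = {a ∈ T | ¬φ a = 1} :=
    filter_congr fun a ha => by rcases hφ a ha with h | h <;> simp [h]
  have hcard := card_filter_add_card_filter_not (s := T) (fun a => φ a = 1)
  have hφsum : ∑ a ∈ T, φ a = #{a ∈ T | φ a = 1} - #{a ∈ T | φ a = -1} := by
    rw [← sum_filter_add_sum_filter_not T (fun a => φ a = 1), ← hneg,
      sum_congr rfl fun a ha => (mem_filter.1 ha).2,
      sum_congr rfl fun a ha => (mem_filter.1 ha).2]
    simp [sub_eq_add_neg]
  rw [hφsum, abs_le] at hsum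
  rw [← hneg] at hcard
  have hle : ∀ ε : ℤ, #{a ∈ T | φ a = ε} ≤ #{a ∈ T | 0 ≤ ε * g a} := fun ε =>
    card_le_card fun a ha => by
      obtain ⟨haT, rfl⟩ := mem_filter.1 ha
      exact mem_filter.2 ⟨haT, by simpa [mul_assoc] using hside a haT⟩
  constructor
  · exact le_trans (by omega) ((hle 1).trans_eq (by simp))
  · exact le_trans (by omega) ((hle (-1)).trans_eq (by simp))

def UpperHalf (p : ℝ × ℝ) : Prop := 0 < p.2 ∨ (p.2 = 0 ∧ 0 < p.1)

/-- On the half-open upper half-plane, `0 ≤ cross p q` orders vectors by angle. -/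
lemma cross_nonneg_trans {p q r : ℝ × ℝ} (hp : UpperHalf p) (hq : UpperHalf q)
    (hr : UpperHalf r) (hpq : 0 ≤ cross p q) (hqr : 0 ≤ cross q r) : 0 ≤ cross p r := by
  have key : cross p r * q.2 = cross p q * r.2 + cross q r * p.2 := by simp only [cross]; ring
  have hp2 : 0 ≤ p.2 := by rcases hp with h | ⟨h, -⟩ <;> linarith
  have hr2 : 0 ≤ r.2 := by rcases hr with h | ⟨h, -⟩ <;> linarith
  rcases hq with hq2 | ⟨hq2, hq1⟩
  · nlinarith
  · simp only [cross, hq2] at hpq key ⊢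
    have : p.2 = 0 := by nlinarith
    rcases hp with h | ⟨-, hp1⟩
    · linarith
    · rw [this]; nlinarith

open Classical in
/-- The junk value `(1, 0)` at `p = 0` keeps `upperRep p` in the upper half-plane, so that the
angular order on all of `ℕ` below is transitive. -/
noncomputable def upperRep (p : ℝ × ℝ) : ℝ × ℝ :=
  if UpperHalf p then p else if p = 0 then (1, 0) else -p

open Classical in
noncomputable def upperSign (p : ℝ × ℝ) : ℤ := if UpperHalf p then 1 else -1

lemma upperHalf_upperRep (p : ℝ × ℝ) : UpperHalf (upperRep p) := by
  unfold upperRep UpperHalf at *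
  split_ifs with h h0
  · exact h
  · simp
  · simp only [not_or, not_and_or, not_lt] at h
    have : p.2 ≠ 0 ∨ p.1 ≠ 0 := by
      by_contra! h'; exact h0 (Prod.ext h'.2 h'.1)
    simp only [Prod.snd_neg, Prod.fst_neg, neg_pos, neg_eq_zero]
    grind

lemma eq_upperSign_smul_upperRep {p : ℝ × ℝ} (hp : p ≠ 0) :
    p = (upperSign p : ℝ) • upperRep p := by
  unfold upperSign upperRep
  split_ifs <;> simp

lemma upperSign_eq (p : ℝ × ℝ) : upperSign p = 1 ∨ upperSign p = -1 := by
  unfold upperSign; split_ifs <;> simp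

theorem exists_halving_line (S : Finset ℕ) (hS : S.Nonempty) (r : ℕ → ℝ × ℝ)
    (hr : ∀ a ∈ S, r a ≠ 0) :
    ∃ x ∈ S, (#S - 1) / 2 ≤ #{a ∈ S.erase x | 0 ≤ cross (r a) (r x)} ∧
      (#S - 1) / 2 ≤ #{a ∈ S.erase x | cross (r a) (r x) ≤ 0} := by
  classical
  set ρ := fun a => upperRep (r a)
  set ε := fun a => upperSign (r a)
  set R : ℕ → ℕ → Prop := fun a b => 0 ≤ cross (ρ a) (ρ b)
  have : Std.Total R := ⟨fun a b => by
    simp only [R]; rw [cross_swap (ρ a)]; exact (le_total 0 _).imp id neg_nonneg.2⟩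
  have : IsTrans ℕ R := ⟨fun a b c => cross_nonneg_trans (upperHalf_upperRep _)
    (upperHalf_upperRep _) (upperHalf_upperRep _)⟩
  obtain ⟨x, hxS, B, A, hnd, herase, hBx, hxA, hbal⟩ :=
    exists_balanced_pivot R ε S (fun a _ => upperSign_eq (r a)) hS
  set φ : ℕ → ℤ := fun a => if a ∈ B then ε a * ε x else -(ε a * ε x)
  have hφ : ∀ a ∈ S.erase x, φ a = 1 ∨ φ a = -1 := fun a _ => by
    simp only [φ]
    rcases upperSign_eq (r a) with h | h <;> rcases upperSign_eq (r x) with h' | h' <;>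
      split_ifs <;> simp [ε, h, h']
  have hside : ∀ a ∈ S.erase x, 0 ≤ (φ a : ℝ) * cross (r a) (r x) := fun a ha => by
    rw [eq_upperSign_smul_upperRep (hr a (mem_of_mem_erase ha)),
      eq_upperSign_smul_upperRep (hr x hxS), cross_smul_smul]
    rw [← herase, List.mem_toFinset, List.mem_append] at ha
    have hR : a ∈ B → R a x := hBx a
    have hR' : a ∉ B → R x a := fun h => hxA a (ha.resolve_left h)
    simp only [φ, R, ρ, ε] at hR hR' ⊢
    rw [cross_swap (upperRep (r a))] at hR'
    split_ifs with hB <;> [have := hR hB; have := hR' hB] <;>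
      rcases upperSign_eq (r a) with h | h <;> rcases upperSign_eq (r x) with h' | h' <;>
      simp [h, h'] <;> linarith
  have hsum : |∑ a ∈ S.erase x, φ a| ≤ 1 := by
    have hdisj : ∀ a ∈ A, a ∉ B := fun a haA haB => (List.nodup_append.1 hnd).2.2 a haB a haA rfl
    have hsplit : ∑ a ∈ S.erase x, φ a = ((B.map ε).sum - (A.map ε).sum) * ε x := by
      rw [← herase, List.sum_toFinset _ hnd, List.map_append, List.sum_append,
        List.map_congr_left (l := B) (g := fun a => ε a * ε x) (fun a ha => if_pos ha),
        List.map_congr_left (l := A) (g := fun a => ε a * -ε x)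
          (fun a ha => (if_neg (hdisj a ha)).trans (neg_mul_eq_mul_neg _ _)),
        List.sum_map_mul_right, List.sum_map_mul_right]
      ring
    have hεx : |ε x| = 1 := by rcases upperSign_eq (r x) with h | h <;> simp [ε, h]
    rwa [hsplit, abs_mul, hεx, mul_one]
  refine ⟨x, hxS, ?_⟩
  rw [← card_erase_of_mem hxS]
  exact half_le_card_filter_of_signs _ (fun a => cross (r a) (r x)) φ hφ hsum hside

end Halving

section Greedy

/-- Removing the elements of `S` one at a time as in `hstep`; `pos i` is the size of the set
from which `i` is removed. -/
lemma exists_removal_order (c : ℕ → ℕ) (Φ : Finset ℕ → ℕ) (K : Finset ℕ)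
    (hstep : ∀ S ⊆ K, S.Nonempty → ∃ x ∈ S, (#S - 1) / 2 * c x + Φ (S.erase x) ≤ Φ S) :
    ∀ S ⊆ K, ∃ pos : ℕ → ℕ, Set.InjOn pos S ∧ Set.MapsTo pos S (Set.Icc 1 #S) ∧
      ∑ i ∈ S, (pos i - 1) / 2 * c i ≤ Φ S := by
  intro S
  induction S using Finset.strongInduction with
  | H S ih =>
  intro hSK
  rcases S.eq_empty_or_nonempty with rfl | hne
  · exact ⟨id, by simp, by simp, by simp⟩
  obtain ⟨x, hx, hΦ⟩ := hstep S hSK hne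
  obtain ⟨pos, hinj, hmaps, hsum⟩ :=
    ih (S.erase x) (erase_ssubset hx) ((erase_subset x S).trans hSK)
  rw [card_erase_of_mem hx] at hmaps
  have hlt : ∀ a ∈ S, a ≠ x → pos a < #S := fun a ha hax =>
    lt_of_le_of_lt (hmaps (mem_erase.2 ⟨hax, ha⟩)).2 (Nat.sub_lt hne.card_pos one_pos)
  refine ⟨Function.update pos x #S, fun a ha b hb hab => ?_, fun a ha => ?_, ?_⟩
  · by_cases hax : a = x <;> by_cases hbx : b = x
    · rw [hax, hbx]
    · subst hax; simp [Function.update_of_ne hbx] at hab; exact absurd hab (hlt b hb hbx).ne'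
    · subst hbx; simp [Function.update_of_ne hax] at hab; exact absurd hab (hlt a ha hax).ne
    · simp only [Function.update_of_ne hax, Function.update_of_ne hbx] at hab
      exact hinj (mem_erase.2 ⟨hax, ha⟩) (mem_erase.2 ⟨hbx, hb⟩) hab
  · by_cases hax : a = x
    · subst hax; simpa using hne.card_pos
    · rw [Function.update_of_ne hax]
      exact ⟨(hmaps (mem_erase.2 ⟨hax, ha⟩)).1, (hlt a ha hax).le⟩
  · rw [← add_sum_erase S _ hx, Function.update_self,
      sum_congr rfl fun a ha => by rw [Function.update_of_ne (ne_of_mem_erase ha)]]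
    omega

/-- By the rearrangement inequality, the worst removal order for the greedy bound is
`k, k - 1, …, 1`. -/
lemma sum_le_of_greedy_step (c : ℕ → ℕ) (k : ℕ) (hc : AntitoneOn c (Set.Icc 1 k))
    (Φ : Finset ℕ → ℕ)
    (hstep : ∀ S ⊆ Icc 1 k, S.Nonempty → ∃ x ∈ S, (#S - 1) / 2 * c x + Φ (S.erase x) ≤ Φ S) :
    ∑ i ∈ Icc 1 k, (i - 1) / 2 * c i ≤ Φ (Icc 1 k) := by
  obtain ⟨pos, hinj, hmaps, hsum⟩ := exists_removal_order c Φ _ hstep _ subset_rfl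
  rw [coe_Icc] at hinj hmaps
  rw [Nat.card_Icc, Nat.add_sub_cancel] at hmaps
  have hbij : Set.BijOn pos (Set.Icc 1 k) (Set.Icc 1 k) :=
    ((Set.finite_Icc 1 k).injOn_iff_bijOn_of_mapsTo hmaps).1 hinj
  set σ := Equiv.Perm.ofSubtype (hbij.equiv pos)
  have hanti : AntivaryOn (fun i => (i - 1) / 2) c (Icc 1 k : Set ℕ) := by
    intro i hi j hj hij
    rw [coe_Icc] at hi hj
    have : j < i := lt_of_not_ge fun hji => (hc hi hj hji).not_gt hij
    exact Nat.div_le_div_right (Nat.sub_le_sub_right this.le 1)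
  calc ∑ i ∈ Icc 1 k, (i - 1) / 2 * c i
      ≤ ∑ i ∈ Icc 1 k, (σ i - 1) / 2 * c i :=
        hanti.sum_mul_le_sum_comp_perm_mul fun i hi => by
          by_contra h
          exact hi (Equiv.Perm.ofSubtype_apply_of_not_mem _ (by rwa [coe_Icc] at h))
    _ = ∑ i ∈ Icc 1 k, (pos i - 1) / 2 * c i :=
        sum_congr rfl fun i hi =>
          by rw [Equiv.Perm.ofSubtype_apply_of_mem _ (by simpa using hi)]; rfl
    _ ≤ Φ (Icc 1 k) := hsum

lemma sum_filter_mul_shift (c : ℕ → ℕ) (k r : ℕ) (hr : r = 1 ∨ r = 2) :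
    ∑ i ∈ Icc 1 k with 2 * i + r ≤ k, i * c (2 * i + r) =
      ∑ i ∈ Icc 1 k with 3 ≤ i ∧ i % 2 = r % 2, (i - 1) / 2 * c i := by
  refine sum_nbij' (fun i => 2 * i + r) (fun i => (i - 1) / 2) ?_ ?_ ?_ ?_ fun i _ => ?_
  any_goals simp only [mem_filter, mem_Icc]; intros; omega
  rw [show (2 * i + r - 1) / 2 = i by omega]

lemma sum_filter_odd_add_sum_filter_even (c : ℕ → ℕ) (k : ℕ) :
    ∑ i ∈ Icc 1 k with 2 * i + 1 ≤ k, i * c (2 * i + 1) +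
      ∑ i ∈ Icc 1 k with 2 * i + 2 ≤ k, i * c (2 * i + 2) =
      ∑ i ∈ Icc 1 k, (i - 1) / 2 * c i := by
  have hlow : ∑ i ∈ Icc 1 k, (i - 1) / 2 * c i = ∑ i ∈ Icc 1 k with 3 ≤ i, (i - 1) / 2 * c i :=
    (sum_filter_of_ne fun i _ h => by
      by_contra h'; exact h (by rw [Nat.div_eq_of_lt (by omega), zero_mul])).symm
  rw [sum_filter_mul_shift c k 1 (by simp), sum_filter_mul_shift c k 2 (by simp), hlow,
    ← sum_filter_add_sum_filter_not {i ∈ Icc 1 k | 3 ≤ i} (fun i => i % 2 = 1), filter_filter,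
    filter_filter]
  congr 1
  exact sum_congr (filter_congr fun i _ => by omega) fun _ _ => rfl

end Greedy

section Tree

lemma forall_pos_or_forall_neg_of_mul_pos {ι : Type*} {s : Finset ι} {g : ι → ℝ}
    (h : ∀ a ∈ s, ∀ b ∈ s, 0 < g a * g b) : (∀ a ∈ s, 0 < g a) ∨ ∀ a ∈ s, g a < 0 := by
  rcases s.eq_empty_or_nonempty with rfl | ⟨a₀, ha₀⟩
  · simp
  rcases pos_and_pos_or_neg_and_neg_of_mul_pos (h a₀ ha₀ a₀ ha₀) with ⟨hpos, -⟩ | ⟨hneg, -⟩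
  · exact .inl fun b hb => pos_of_mul_pos_right (h a₀ ha₀ b hb) hpos.le
  · exact .inr fun b hb => neg_of_mul_pos_right (h a₀ ha₀ b hb) hneg.le

variable {V : Type*}

lemma cross_mul_cross_pos_of_crosses {G : SimpleGraph V} {f : V → ℝ × ℝ}
    (hf : IsLegalDrawing G f) {v y w p q : V} (hyw : G.Adj y w) (hvp : G.Adj v p)
    (hyv : y ≠ v) (hyp : y ≠ p) (hwv : w ≠ v) (hwp : w ≠ p)
    (hp : Crosses f s(y, w) s(v, p)) (hq : Crosses f s(y, w) s(v, q)) :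
    0 < cross (f p - f v) (f y - f v) * cross (f q - f v) (f y - f v) := by
  obtain ⟨hinj, hseg, -⟩ := hf
  obtain ⟨z, hz, hz'⟩ := hp
  obtain ⟨z', hq, hq'⟩ := hq
  by_contra! hside
  exact not_crosses_both_of_cross_mul_cross_nonpos hside (hinj.ne hyw.ne') (hinj.ne hyv)
    (hinj.ne hyp) (hseg y w v hyw hyv.symm hwv.symm) (hseg y w p hyw hyp.symm hwp.symm)
    (hseg v p y hvp hyv hyp) ⟨⟨z, hz', hz⟩, ⟨z', hq', hq⟩⟩

variable [Fintype V] [DecidableEq V] {G : SimpleGraph V} [DecidableRel G.Adj]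

/-- The children of `y` in the tree rooted at its neighbour `v`. -/
def childFinset (G : SimpleGraph V) [DecidableRel G.Adj] (v y : V) : Finset V :=
  (G.neighborFinset y).erase v

lemma card_childFinset {v y : V} (h : G.Adj v y) : #(childFinset G v y) = G.degree y - 1 := by
  rw [childFinset, card_erase_of_mem (by simpa using h.symm), card_neighborFinset_eq_degree]

/-- `w = p` would close the triangle `v y p`. -/
lemma adj_and_ne_of_mem_childFinset (hG : G.IsAcyclic) {v y p w : V} (hy : G.Adj v y)
    (hp : G.Adj v p) (hw : w ∈ childFinset G v y) : G.Adj y w ∧ w ≠ v ∧ w ≠ p := by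
  obtain ⟨hwv, hyw⟩ := mem_erase.1 hw
  rw [mem_neighborFinset] at hyw
  refine ⟨hyw, hwv, ?_⟩
  rintro rfl
  exact hG.cliqueFree le_rfl {v, y, w} (is3Clique_triple_iff.2 ⟨hy, hp, hyw⟩)

variable {f : V → ℝ × ℝ} {v : V} {u : ℕ → V}

lemma leaf_root_pair_inj (hG : G.IsAcyclic) {K : Finset ℕ} (hu : Set.InjOn u K)
    (huv : ∀ i ∈ K, G.Adj v (u i)) {x a x' a' : ℕ} {w w' : V} (hx : x ∈ K) (ha : a ∈ K)
    (hx' : x' ∈ K) (ha' : a' ∈ K) (hw : w ∈ childFinset G v (u x))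
    (hw' : w' ∈ childFinset G v (u x'))
    (h : ({s(u x, w), s(v, u a)} : Finset (Sym2 V)) = {s(u x', w'), s(v, u a')}) :
    x = x' ∧ w = w' ∧ a = a' := by
  obtain ⟨-, hwv, -⟩ := adj_and_ne_of_mem_childFinset hG (huv x hx) (huv a ha) hw
  obtain ⟨-, -, hwx⟩ := adj_and_ne_of_mem_childFinset hG (huv x' hx') (huv x hx) hw'
  simp only [← coe_inj, coe_pair, Set.pair_eq_pair_iff, Sym2.eq_iff] at h
  rcases h with ⟨⟨hxx, rfl⟩ | ⟨hxw, -⟩, ⟨-, haa⟩ | ⟨hva, -⟩⟩ | ⟨⟨hxv, -⟩ | ⟨-, hwv'⟩, -⟩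
  · exact ⟨hu hx hx' hxx, rfl, hu ha ha' haa⟩
  · exact absurd hva (huv a' ha').ne
  · exact absurd hxw.symm hwx
  · exact absurd hva (huv a' ha').ne
  · exact absurd hxv (huv x hx).ne'
  · exact absurd hwv' hwv

variable (G f v u) in
noncomputable def missedCount (S : Finset ℕ) : ℕ :=
  ∑ x ∈ S, ∑ w ∈ childFinset G v (u x), #{a ∈ S.erase x | ¬Crosses f s(u x, w) s(v, u a)}

/-- The root edges crossed by a leaf edge below `u x` lie strictly on one side of the line
through `v` and `u x`. -/
lemma half_le_card_not_crosses (hf : IsLegalDrawing G f) (hG : G.IsAcyclic) {S : Finset ℕ}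
    (hu : Set.InjOn u S) (huv : ∀ i ∈ S, G.Adj v (u i)) {x : ℕ} (hx : x ∈ S)
    (hhalf : (#S - 1) / 2 ≤ #{a ∈ S.erase x | 0 ≤ cross (f (u a) - f v) (f (u x) - f v)} ∧
      (#S - 1) / 2 ≤ #{a ∈ S.erase x | cross (f (u a) - f v) (f (u x) - f v) ≤ 0})
    {w : V} (hw : w ∈ childFinset G v (u x)) :
    (#S - 1) / 2 ≤ #{a ∈ S.erase x | ¬Crosses f s(u x, w) s(v, u a)} := by
  have hmul : ∀ a ∈ {a ∈ S.erase x | Crosses f s(u x, w) s(v, u a)},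
      ∀ b ∈ {a ∈ S.erase x | Crosses f s(u x, w) s(v, u a)},
      0 < cross (f (u a) - f v) (f (u x) - f v) * cross (f (u b) - f v) (f (u x) - f v) := by
    intro a ha b hb
    obtain ⟨⟨hax, haS⟩, hca⟩ := And.imp_left mem_erase.1 (mem_filter.1 ha)
    obtain ⟨hyw, hwv, hwa⟩ := adj_and_ne_of_mem_childFinset hG (huv x hx) (huv a haS) hw
    exact cross_mul_cross_pos_of_crosses hf hyw (huv a haS) (huv x hx).ne'
      (fun h => hax (hu haS hx h.symm)) hwv hwa hca (mem_filter.1 hb).2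
  rcases forall_pos_or_forall_neg_of_mul_pos hmul with hpos | hneg
  · refine hhalf.2.trans (card_le_card fun a ha => ?_)
    obtain ⟨ha, hle⟩ := mem_filter.1 ha
    exact mem_filter.2 ⟨ha, fun hc => (hpos a (mem_filter.2 ⟨ha, hc⟩)).not_ge hle⟩
  · refine hhalf.1.trans (card_le_card fun a ha => ?_)
    obtain ⟨ha, hle⟩ := mem_filter.1 ha
    exact mem_filter.2 ⟨ha, fun hc => (hneg a (mem_filter.2 ⟨ha, hc⟩)).not_ge hle⟩

lemma exists_missedCount_step (hf : IsLegalDrawing G f) (hG : G.IsAcyclic) {K : Finset ℕ}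
    (hu : Set.InjOn u K) (huv : ∀ i ∈ K, G.Adj v (u i)) (c : ℕ → ℕ)
    (hc : ∀ i ∈ K, c i = G.degree (u i) - 1) (S : Finset ℕ) (hSK : S ⊆ K) (hS : S.Nonempty) :
    ∃ x ∈ S, (#S - 1) / 2 * c x + missedCount G f v u (S.erase x) ≤ missedCount G f v u S := by
  obtain ⟨x, hx, hhalf⟩ := exists_halving_line S hS (fun a => f (u a) - f v)
    fun a ha => sub_ne_zero.2 (hf.1.ne (huv a (hSK ha)).ne')
  refine ⟨x, hx, ?_⟩
  unfold missedCount
  rw [← add_sum_erase S _ hx]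
  gcongr ?_ + ?_
  · rw [hc x (hSK hx), ← card_childFinset (huv x (hSK hx)), mul_comm, ← smul_eq_mul, ← sum_const]
    exact sum_le_sum fun w hw => half_le_card_not_crosses hf hG (hu.mono (coe_subset.2 hSK))
      (fun i hi => huv i (hSK hi)) hx hhalf hw
  · exact sum_le_sum fun x' _ => sum_le_sum fun w _ =>
      card_le_card (filter_subset_filter _ (erase_subset_erase _ (erase_subset _ _)))

lemma exists_missedCrossings (hG : G.IsAcyclic) {K : Finset ℕ} (hu : Set.InjOn u K)
    (huv : ∀ i ∈ K, G.Adj v (u i)) :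
    ∃ M : Finset (Finset (Sym2 V)), missedCount G f v u K ≤ #M ∧
      ∀ t ∈ M, IsMissedCrossing G f t := by
  set X := K.sigma fun x => (childFinset G v (u x)).sigma fun w =>
    {a ∈ K.erase x | ¬Crosses f s(u x, w) s(v, u a)}
  have hmemX : ∀ {x w a}, ⟨x, w, a⟩ ∈ X ↔ x ∈ K ∧ w ∈ childFinset G v (u x) ∧
      (a ≠ x ∧ a ∈ K) ∧ ¬Crosses f s(u x, w) s(v, u a) := by
    simp [X]
  set pair : (Σ _ : ℕ, Σ _ : V, ℕ) → Finset (Sym2 V) := fun t => {s(u t.1, t.2.1), s(v, u t.2.2)}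
  refine ⟨X.image pair, ?_, ?_⟩
  · rw [card_image_of_injOn]
    · simp [X, missedCount, card_sigma]
    rintro ⟨x, w, a⟩ h ⟨x', w', a'⟩ h' heq
    obtain ⟨hx, hw, ⟨-, ha⟩, -⟩ := hmemX.1 h
    obtain ⟨hx', hw', ⟨-, ha'⟩, -⟩ := hmemX.1 h'
    obtain ⟨rfl, rfl, rfl⟩ := leaf_root_pair_inj hG hu huv hx ha hx' ha' hw hw' heq
    rfl
  · intro t ht
    obtain ⟨⟨x, w, a⟩, h, rfl⟩ := mem_image.1 ht
    obtain ⟨hx, hw, ⟨hax, ha⟩, hmiss⟩ := hmemX.1 h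
    obtain ⟨hyw, hwv, hwa⟩ := adj_and_ne_of_mem_childFinset hG (huv x hx) (huv a ha) hw
    refine ⟨_, _, rfl, hyw, huv a ha, ?_, hmiss⟩
    simp only [Sym2.mem_iff]
    rintro z (rfl | rfl) (h | h)
    · exact (huv x hx).ne' h
    · exact hax (hu ha hx h.symm)
    · exact hwv h
    · exact hwa h

end Tree

end TreeDrawing

open TreeDrawing

theorem diameter_four_crossing_upper_bound_general (n k : ℕ) (T : SimpleGraph (Fin n))
    [DecidableRel T.Adj] (hT : T.IsTree)
    (v : Fin n)
    (u : ℕ → Fin n) (huinj : Set.InjOn u (Set.Icc 1 k))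
    (huadj : ∀ i ∈ Finset.Icc 1 k, T.Adj v (u i))
    (c : ℕ → ℕ) (hc : ∀ i ∈ Finset.Icc 1 k, c i = T.degree (u i) - 1)
    (hsort : ∀ i j, 1 ≤ i → i ≤ j → j ≤ k → c j ≤ c i)
    (f : Fin n → ℝ × ℝ) (hf : IsLegalDrawing T f) :
    (crossCount T f : ℤ) ≤
      (Nat.choose (n - 1) 2 : ℤ) - ∑ w : Fin n, (Nat.choose (T.degree w) 2 : ℤ) -
        ((∑ i ∈ (Finset.Icc 1 k).filter (fun i => 2 * i + 1 ≤ k),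
            (i : ℤ) * (c (2 * i + 1) : ℤ)) +
         (∑ i ∈ (Finset.Icc 1 k).filter (fun i => 2 * i + 2 ≤ k),
            (i : ℤ) * (c (2 * i + 2) : ℤ))) := by
  have hK : Set.InjOn u (Icc 1 k : Finset ℕ) := by rwa [coe_Icc]
  have hd := sum_le_of_greedy_step c k (fun i hi j hj hij => hsort i j hi.1 hij hj.2) _
    (exists_missedCount_step hf hT.isAcyclic hK huadj c hc)
  rw [← sum_filter_odd_add_sum_filter_even] at hd
  obtain ⟨M, hM, hMmissed⟩ := exists_missedCrossings (f := f) hT.isAcyclic hK huadj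
  have hcount := crossCount_add_card_le T f M hMmissed
  have hedges : #T.edgeFinset = n - 1 := by
    have := hT.card_edgeFinset
    rw [Fintype.card_fin] at this
    omega
  rw [hedges] at hcount
  have hmissed := (Nat.cast_le (α := ℤ)).2 (hd.trans hM)
  have hbound := (Nat.cast_le (α := ℤ)).2 hcount
  push_cast at hmissed hbound
  linarith

/-- Let `T` be a tree on `n` vertices of diameter exactly `4`, with root `v`
(the unique vertex of eccentricity `2`), of type `(c_1, …, c_k)`: `v` has exactly `k`
children `u 1, …, u k`, and `u i` has exactly `c i` children (so `c i = d(u i) − 1`), with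
`c_1 ≥ … ≥ c_k`. Let `d = ∑_{i ≥ 1, 2i+1 ≤ k} i·c_{2i+1} + ∑_{i ≥ 1, 2i+2 ≤ k} i·c_{2i+2}`.
Then in every legal rectilinear drawing of `T` the number of crossing pairs of edges is at
most `C(n−1, 2) − ∑_w C(d(w), 2) − d`. -/
theorem diameter_four_crossing_upper_bound (n k : ℕ) (T : SimpleGraph (Fin n))
    [DecidableRel T.Adj] (hT : T.IsTree)
    (hdiam : (∃ x y, T.dist x y = 4) ∧ ∀ x y, T.dist x y ≤ 4)
    (v : Fin n) (hroot : ∀ w, T.dist v w ≤ 2)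
    (hk : T.degree v = k)
    (u : ℕ → Fin n) (huinj : Set.InjOn u (Set.Icc 1 k))
    (huadj : ∀ i ∈ Finset.Icc 1 k, T.Adj v (u i))
    (c : ℕ → ℕ) (hc : ∀ i ∈ Finset.Icc 1 k, c i = T.degree (u i) - 1)
    (hsort : ∀ i j, 1 ≤ i → i ≤ j → j ≤ k → c j ≤ c i)
    (f : Fin n → ℝ × ℝ) (hf : IsLegalDrawing T f) :
    (crossCount T f : ℤ) ≤
      (Nat.choose (n - 1) 2 : ℤ) - ∑ w : Fin n, (Nat.choose (T.degree w) 2 : ℤ) -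
        ((∑ i ∈ (Finset.Icc 1 k).filter (fun i => 2 * i + 1 ≤ k),
            (i : ℤ) * (c (2 * i + 1) : ℤ)) +
         (∑ i ∈ (Finset.Icc 1 k).filter (fun i => 2 * i + 2 ≤ k),
            (i : ℤ) * (c (2 * i + 2) : ℤ))) :=
  diameter_four_crossing_upper_bound_general n k T hT v u huinj huadj c hc hsort f hf
end

section
/- Let k ≥ 1 and let c_1 ≥ c_2 ≥ … ≥ c_k ≥ 0 be real numbers. Then Σ_{1 ≤ i < j ≤ k} min{c_i, c_j} − Σ_{1 ≤ i < j ≤ k, i ≢ j (mod 2)} min{c_i, c_j} = Σ_{i ≥ 1} i·c_{2i+1} + Σ_{i ≥ 1} i·c_{2i+2}, where the sums on the right run over all indices 2i+1 ≤ k and 2i+2 ≤ k respectively. Equivalently, w_min(K_k) − w_min(B_3(v_1, …, v_k)) = d(c_1, …, c_k) when the vertex v_i carries weight c_i. -/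
open Finset

private lemma cardS : ∀ j : ℕ, (((range j).filter (fun i => 1 ≤ i ∧ i % 2 = j % 2)).card) = (j-1)/2 := by
  intro j
  induction j using Nat.strong_induction_on with
  | _ j ih =>
    match j with
    | 0 => decide
    | 1 => decide
    | 2 => decide
    | (n+3) =>
      have h1 : (range (n+3)).filter (fun i => 1 ≤ i ∧ i % 2 = (n+3) % 2)
          = insert (n+1) ((range (n+1)).filter (fun i => 1 ≤ i ∧ i % 2 = (n+1) % 2)) := by
        ext i
        simp only [Finset.mem_filter, Finset.mem_range, Finset.mem_insert]
        omega
      rw [h1, Finset.card_insert_of_notMem (by simp), ih (n+1) (by omega)]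
      omega

private lemma Icc_top (f : ℕ → ℝ) {m : ℕ} (hm : 1 ≤ m) :
    ∑ i ∈ Icc 1 m, f i = (∑ i ∈ Icc 1 (m-1), f i) + f m := by
  rw [show Icc 1 m = insert m (Icc 1 (m-1)) by ext i; simp [Finset.mem_Icc]; omega,
    Finset.sum_insert (by simp [Finset.mem_Icc]; omega)]
  ring

private lemma sumD (c : ℕ → ℝ) : ∀ k : ℕ,
    ∑ j ∈ Icc 1 k, (((j-1)/2 : ℕ) : ℝ) * c j
    = (∑ i ∈ Icc 1 ((k-1)/2), (i:ℝ) * c (2*i+1))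
      + ∑ i ∈ Icc 1 ((k-2)/2), (i:ℝ) * c (2*i+2) := by
  intro k
  induction k with
  | zero => simp
  | succ k ih =>
    rcases Nat.eq_zero_or_pos k with rfl | hk
    · simp
    rw [Icc_top (fun j => (((j-1)/2 : ℕ) : ℝ) * c j) (by omega)]
    simp only [Nat.add_sub_cancel]
    rw [ih]
    rcases Nat.even_or_odd k with ⟨m, hm⟩ | ⟨m, hm⟩
    · -- k = 2m, m ≥ 1 ; k+1 odd : first sum gains m * c (2m+1) = m * c (k+1)
      have hm1 : 1 ≤ m := by omega
      have e1 : ((k+1)-1)/2 = m := by omega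
      have e2 : (k-1)/2 = m - 1 := by omega
      have e3 : ((k+1)-2)/2 = (k-2)/2 := by omega
      rw [show k/2 = m by omega, e2, show (k+1-2)/2 = (k-2)/2 by omega,
        Icc_top (fun i => (i:ℝ) * c (2*i+1)) hm1]
      rw [show 2*m+1 = k+1 by omega]
      ring
    · -- k = 2m+1 ; k+1 even : second sum gains m * c (2m+2) = m * c (k+1)
      have e1 : ((k+1)-1)/2 = m := by omega
      have e3 : ((k+1)-2)/2 = m := by omega
      rcases Nat.eq_zero_or_pos m with rfl | hm1
      · have : k = 1 := by omega
        subst this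
        simp
      have e2 : (k-1)/2 = m := by omega
      have e4 : (k-2)/2 = m - 1 := by omega
      rw [show k/2 = m by omega, e2, show (k+1-2)/2 = m by omega, e4,
        Icc_top (fun i => (i:ℝ) * c (2*i+2)) hm1]
      rw [show 2*m+2 = k+1 by omega]
      ring

/-- Let `k ≥ 1` and `c_1 ≥ c_2 ≥ … ≥ c_k ≥ 0` be reals (given by `c : ℕ → ℝ`,
antitone on `[1, k]` with `c k ≥ 0`). Then
`∑_{1 ≤ i < j ≤ k} min(c_i, c_j) − ∑_{1 ≤ i < j ≤ k, i ≢ j (mod 2)} min(c_i, c_j)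
  = ∑_{i ≥ 1, 2i+1 ≤ k} i·c_{2i+1} + ∑_{i ≥ 1, 2i+2 ≤ k} i·c_{2i+2}`;
i.e. `w_min(K_k) − w_min(B_3(v_1, …, v_k)) = d(c_1, …, c_k)` where vertex `v_i` has
weight `c_i`. -/
theorem min_weight_complete_minus_bipartite (k : ℕ) (hk : 1 ≤ k) (c : ℕ → ℝ)
    (hmono : ∀ i j, 1 ≤ i → i ≤ j → j ≤ k → c j ≤ c i) (hnn : 0 ≤ c k) :
    (∑ i ∈ Finset.Icc 1 k, ∑ j ∈ Finset.Icc 1 k, if i < j then min (c i) (c j) else 0) -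
      (∑ i ∈ Finset.Icc 1 k, ∑ j ∈ Finset.Icc 1 k,
        if i < j ∧ i % 2 ≠ j % 2 then min (c i) (c j) else 0) =
    (∑ i ∈ (Finset.Icc 1 k).filter (fun i => 2 * i + 1 ≤ k), (i : ℝ) * c (2 * i + 1)) +
    (∑ i ∈ (Finset.Icc 1 k).filter (fun i => 2 * i + 2 ≤ k), (i : ℝ) * c (2 * i + 2)) := by
  have step1 : (∑ i ∈ Finset.Icc 1 k, ∑ j ∈ Finset.Icc 1 k, if i < j then min (c i) (c j) else 0) -
      (∑ i ∈ Finset.Icc 1 k, ∑ j ∈ Finset.Icc 1 k,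
        if i < j ∧ i % 2 ≠ j % 2 then min (c i) (c j) else 0)
      = ∑ j ∈ Finset.Icc 1 k, ∑ i ∈ Finset.Icc 1 k,
          if i < j ∧ i % 2 = j % 2 then c j else 0 := by
    rw [← Finset.sum_sub_distrib]
    rw [Finset.sum_comm (γ := ℕ)]
    refine Finset.sum_congr rfl fun j hj => ?_
    rw [← Finset.sum_sub_distrib]
    refine Finset.sum_congr rfl fun i hi => ?_
    simp only [Finset.mem_Icc] at hi hj
    by_cases h1 : j < i
    · have hmin : min (c j) (c i) = c i := min_eq_right (hmono j i hj.1 h1.le hi.2)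
      by_cases h2 : j % 2 = i % 2 <;> simp [h1, h2, hmin]
    · simp [h1]
  rw [step1]
  have step2 : ∀ j ∈ Finset.Icc 1 k,
      (∑ i ∈ Finset.Icc 1 k, if i < j ∧ i % 2 = j % 2 then c j else 0)
        = (((j-1)/2 : ℕ) : ℝ) * c j := by
    intro j hj
    simp only [Finset.mem_Icc] at hj
    rw [← Finset.sum_filter]
    have hset : (Finset.Icc 1 k).filter (fun i => i < j ∧ i % 2 = j % 2)
        = (range j).filter (fun i => 1 ≤ i ∧ i % 2 = j % 2) := by
      ext i
      simp only [Finset.mem_filter, Finset.mem_Icc, Finset.mem_range]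
      omega
    rw [hset, Finset.sum_const, cardS j, nsmul_eq_mul]
  rw [Finset.sum_congr rfl step2, sumD]
  congr 1
  · apply Finset.sum_congr _ (fun _ _ => rfl)
    ext i
    simp only [Finset.mem_Icc, Finset.mem_filter]
    omega
  · apply Finset.sum_congr _ (fun _ _ => rfl)
    ext i
    simp only [Finset.mem_Icc, Finset.mem_filter]
    omega
end
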